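/- arXiv:1705.04565 — 10 statements merged into one kernel-verified Lean document; each statement's English description precedes it below -/
import Mathlib

section
/- If K ⊂ ℝ^D is a nonempty compact set that is not homotopy equivalent to a point (i.e. K is not contractible), then τ_K ≤ sqrt(D/(2(D+1))) · diam(K). -/
open Metric Set ENNReal

noncomputable section

abbrev Euc (D : ℕ) := EuclideanSpace ℝ (Fin D)

variable {D : ℕ}

/-- The medial axis of a set `A ⊆ ℝ^D`: points having at least two nearest points on `A`. -/
def medialAxis (A : Set (Euc D)) : Set (Euc D) :=
  {z | ∃ p ∈ A, ∃ q ∈ A, p ≠ q ∧ dist p z = Metric.infDist z A ∧ dist q z = Metric.infDist z A}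

/-- The reach of `A ⊆ ℝ^D` (with value `∞` when the medial axis is empty). -/
def reach (A : Set (Euc D)) : ℝ≥0∞ :=
  ⨅ z ∈ medialAxis A, ENNReal.ofReal (Metric.infDist z A)

/-!
By Jung's theorem `K` lies in a closed ball of radius `r = √(D / (2 (D + 1))) · diam K` around
some point `z`. If the reach exceeded `r`, every point of a segment from a point of `K` to `z` would
have a unique nearest point on `K`, so the nearest-point map would be continuous there and would
retract the star-shaped union of these segments onto `K`, making `K` contractible.

Jung's theorem follows from Helly's theorem applied to the balls of radius `r` centred at the
points of `K`, once it is known for `D + 1` points. For a finite set, the centre of the smallest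
enclosing ball lies in the convex hull of the farthest points, and averaging the squared pairwise
distances of these points against their barycentric weights gives the bound.
-/

open Filter Topology Finset Module RealInnerProductSpace

section Jung

variable {E : Type*} [NormedAddCommGroup E] [InnerProductSpace ℝ E]

theorem eventually_norm_add_smul_lt_norm {a b : E} (h : ⟪a, b⟫ < 0) :
    ∀ᶠ s in 𝓝[>] (0 : ℝ), ‖a + s • b‖ < ‖a‖ := by
  have hlim : Tendsto (fun s : ℝ => 2 * ⟪a, b⟫ + s * ‖b‖ ^ 2) (𝓝[>] 0) (𝓝 (2 * ⟪a, b⟫)) :=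
    tendsto_nhdsWithin_of_tendsto_nhds <| Continuous.tendsto' (by fun_prop) _ _ (by simp)
  filter_upwards [self_mem_nhdsWithin, hlim.eventually_lt_const (show 2 * ⟪a, b⟫ < 0 by linarith)]
    with s hs hneg
  have hexp : ‖a + s • b‖ ^ 2 = ‖a‖ ^ 2 + s * (2 * ⟪a, b⟫ + s * ‖b‖ ^ 2) := by
    rw [norm_add_sq_real, inner_smul_right, norm_smul, Real.norm_eq_abs, abs_of_pos hs]
    ring
  refine (pow_lt_pow_iff_left₀ (norm_nonneg _) (norm_nonneg _) two_ne_zero).1 ?_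
  rw [hexp]
  linarith [mul_neg_of_pos_of_neg (show (0 : ℝ) < s from hs) hneg]

theorem mem_convexHull_farthest_of_forall_sup'_dist_le [CompleteSpace E] {S : Finset E}
    (hS : S.Nonempty) {c : E} (hc : ∀ y, S.sup' hS (dist c) ≤ S.sup' hS (dist y)) :
    c ∈ convexHull ℝ ↑{x ∈ S | dist c x = S.sup' hS (dist c)} := by
  set R := S.sup' hS (dist c)
  by_contra hcT
  obtain ⟨f, u, hfc, hfT⟩ := geometric_hahn_banach_point_closed (convex_convexHull ℝ _)
    ((finite_toSet _).isClosed_convexHull ℝ) hcT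
  set v := (InnerProductSpace.toDual ℝ E).symm f
  have hv : ∀ y, ⟪v, y⟫ = f y := fun y => InnerProductSpace.toDual_symm_apply
  have hnear : ∀ x ∈ S, ∀ᶠ s in 𝓝[>] (0 : ℝ), dist (c + s • v) x < R := by
    intro x hx
    by_cases hxT : dist c x = R
    · have hinner : ⟪c - x, v⟫ < 0 := by
        rw [real_inner_comm, inner_sub_right, hv, hv]
        linarith [hfT x (subset_convexHull ℝ _ (mem_filter.2 ⟨hx, hxT⟩))]
      filter_upwards [eventually_norm_add_smul_lt_norm hinner] with s hs
      rwa [← dist_eq_norm, hxT, sub_add_eq_add_sub, ← dist_eq_norm] at hs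
    · have hlt : dist c x < R := (le_sup' (dist c) hx).lt_of_ne hxT
      refine tendsto_nhdsWithin_of_tendsto_nhds ?_ |>.eventually_lt_const hlt
      exact Continuous.tendsto' (by fun_prop) _ _ (by simp)
  obtain ⟨s, hs⟩ := ((eventually_all_finset S).2 hnear).exists
  exact (hc (c + s • v)).not_gt ((sup'_lt_iff hS).2 hs)

theorem sq_radius_le_of_mem_convexHull {T : Finset E} {c : E} {R d : ℝ} {n : ℕ}
    (hc : c ∈ convexHull ℝ (T : Set E)) (hR : ∀ x ∈ T, dist x c = R)
    (hd : ∀ x ∈ T, ∀ y ∈ T, dist x y ≤ d) (hn : #T ≤ n + 1) :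
    2 * (n + 1) * R ^ 2 ≤ n * d ^ 2 := by
  classical
  obtain ⟨w, hw0, hw1, hwc⟩ := mem_convexHull'.1 hc
  have hbar : ∑ x ∈ T, w x • (x - c) = 0 := by
    simp only [smul_sub, sum_sub_distrib, hwc, ← sum_smul, hw1, one_smul, sub_self]
  -- `c` is the barycentre of `T`, so for each `y ∈ T` the `w`-average of `‖x - y‖²` is `2 R²`
  have hmean : ∀ y ∈ T, 2 * R ^ 2 ≤ (1 - w y) * d ^ 2 := by
    intro y hy
    have hsq : ∀ x ∈ T, ‖x - y‖ ^ 2 = 2 * R ^ 2 - 2 * ⟪x - c, y - c⟫ := by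
      intro x hx
      rw [← sub_sub_sub_cancel_right x y c, norm_sub_sq_real, ← dist_eq_norm, ← dist_eq_norm,
        hR x hx, hR y hy]
      ring
    calc 2 * R ^ 2 = ∑ x ∈ T, w x * ‖x - y‖ ^ 2 := by
          have hzero : ∑ x ∈ T, w x * ⟪x - c, y - c⟫ = 0 := by
            simp_rw [← real_inner_smul_left, ← sum_inner, hbar, inner_zero_left]
          rw [sum_congr rfl fun x hx => by rw [hsq x hx], ← sub_eq_zero]
          simp only [mul_sub, sum_sub_distrib, ← sum_mul, hw1, mul_left_comm _ (2 : ℝ), ← mul_sum,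
            hzero]
          ring
      _ = ∑ x ∈ T.erase y, w x * ‖x - y‖ ^ 2 := by
          rw [sum_erase _ (by simp)]
      _ ≤ ∑ x ∈ T.erase y, w x * d ^ 2 := by
          refine sum_le_sum fun x hx => ?_
          have hxT := mem_of_mem_erase hx
          gcongr
          exacts [hw0 x hxT, dist_eq_norm x y ▸ hd x hxT y hy]
      _ = (1 - w y) * d ^ 2 := by rw [← sum_mul, sum_erase_eq_sub hy, hw1]
  have hcs : 1 ≤ (n + 1) * ∑ x ∈ T, w x ^ 2 := by
    have := sq_sum_le_card_mul_sum_sq (s := T) (f := w)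
    rw [hw1, one_pow] at this
    exact this.trans (mul_le_mul_of_nonneg_right (by exact_mod_cast hn) (by positivity))
  calc 2 * (n + 1) * R ^ 2 = (n + 1) * ∑ y ∈ T, w y * (2 * R ^ 2) := by
        rw [← sum_mul, hw1]; ring
    _ ≤ (n + 1) * ∑ y ∈ T, w y * ((1 - w y) * d ^ 2) :=
        mul_le_mul_of_nonneg_left
          (sum_le_sum fun y hy => mul_le_mul_of_nonneg_left (hmean y hy) (hw0 y hy)) (by positivity)
    _ = (n + 1) * (1 - ∑ y ∈ T, w y ^ 2) * d ^ 2 := by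
        simp only [mul_sub, sub_mul, mul_one, ← mul_assoc, ← sq, sum_sub_distrib, ← sum_mul, hw1]
    _ ≤ n * d ^ 2 := by linarith [mul_le_mul_of_nonneg_right hcs (sq_nonneg d)]

theorem Finset.exists_dist_le_sqrt_mul_diam [ProperSpace E] (S : Finset E) {n : ℕ}
    (hn : #S ≤ n + 1) : ∃ c, ∀ x ∈ S, dist x c ≤ √(n / (2 * (n + 1))) * diam (S : Set E) := by
  rcases S.eq_empty_or_nonempty with rfl | hS
  · exact ⟨0, by simp⟩
  have hg : Continuous fun y => S.sup' hS (dist y) :=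
    Continuous.finset_sup'_apply hS fun x _ => continuous_id.dist continuous_const
  obtain ⟨x₀, hx₀⟩ := hS
  obtain ⟨c, hc⟩ := hg.exists_forall_le <| tendsto_atTop_mono (fun y => le_sup' (dist y) hx₀)
    (tendsto_dist_right_cocompact_atTop x₀)
  set R := S.sup' ⟨x₀, hx₀⟩ (dist c)
  have hRd := sq_radius_le_of_mem_convexHull (mem_convexHull_farthest_of_forall_sup'_dist_le _ hc)
    (fun x hx => by rw [dist_comm]; exact (mem_filter.1 hx).2)
    (fun x hx y hy => dist_le_diam_of_mem S.finite_toSet.isBounded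
      (mem_filter.1 hx).1 (mem_filter.1 hy).1) ((card_filter_le _ _).trans hn)
  have hR : R ≤ √(n / (2 * (n + 1))) * diam (S : Set E) := by
    rw [← Real.sqrt_sq diam_nonneg, ← Real.sqrt_mul (by positivity)]
    refine Real.le_sqrt_of_sq_le ?_
    rw [div_mul_eq_mul_div, le_div_iff₀ (by positivity)]
    linarith
  exact ⟨c, fun x hx => (dist_comm x c ▸ le_sup' (dist c) hx).trans hR⟩

theorem IsCompact.exists_subset_closedBall_sqrt_mul_diam [FiniteDimensional ℝ E] {K : Set E}
    (hK : IsCompact K) :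
    ∃ c, K ⊆ closedBall c (√(finrank ℝ E / (2 * (finrank ℝ E + 1))) * diam K) := by
  set r := √(finrank ℝ E / (2 * (finrank ℝ E + 1))) * diam K
  obtain ⟨c, hc⟩ := Convex.helly_theorem_compact' (𝕜 := ℝ)
    (F := fun x : K => closedBall (x : E) r) (fun _ => convex_closedBall _ _)
    (fun _ => isCompact_closedBall _ _) fun I hI => by
      obtain ⟨c, hc⟩ := (I.map (Function.Embedding.subtype _)).exists_dist_le_sqrt_mul_diam
        (by rwa [card_map])
      refine ⟨c, mem_iInter₂.2 fun x hx => mem_closedBall_comm.1 ?_⟩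
      exact (hc x (mem_map_of_mem _ hx)).trans <|
        mul_le_mul_of_nonneg_left (diam_mono (by simp) hK.isBounded) (Real.sqrt_nonneg _)
  exact ⟨c, fun x hx => mem_closedBall_comm.1 (mem_iInter.1 hc ⟨x, hx⟩)⟩

end Jung

theorem ContractibleSpace.of_retraction {X Y : Type*} [TopologicalSpace X] [TopologicalSpace Y]
    [ContractibleSpace X] (i : C(Y, X)) (r : C(X, Y)) (hri : r.comp i = .id Y) :
    ContractibleSpace Y :=
  (contractible_iff_id_nullhomotopic Y).2 <| hri ▸ by
    simpa using ((id_nullhomotopic X).comp_right r).comp_left i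

section NearestPoint

variable {α : Type*} [PseudoMetricSpace α] {K : Set α} (hK : IsCompact K) (hne : K.Nonempty)

def IsCompact.nearestPoint (y : α) : α := (hK.exists_infDist_eq_dist hne y).choose

theorem IsCompact.nearestPoint_mem (y : α) : hK.nearestPoint hne y ∈ K :=
  (hK.exists_infDist_eq_dist hne y).choose_spec.1

theorem IsCompact.infDist_eq_dist_nearestPoint (y : α) :
    infDist y K = dist y (hK.nearestPoint hne y) :=
  (hK.exists_infDist_eq_dist hne y).choose_spec.2

theorem IsCompact.continuousWithinAt_nearestPoint {S : Set α} {y : α}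
    (huniq : ∀ p ∈ K, infDist y K = dist y p → p = hK.nearestPoint hne y) :
    ContinuousWithinAt (hK.nearestPoint hne) S y := by
  refine hK.tendsto_nhds_of_unique_mapClusterPt (.of_forall (hK.nearestPoint_mem hne))
    fun p hp hclust => huniq p hp ?_
  refine le_antisymm (infDist_le_dist_of_mem hp) (le_of_forall_pos_lt_add fun ε hε => ?_)
  have hnear : ∀ᶠ w in 𝓝[S] y, dist w y < ε / 3 :=
    nhdsWithin_le_nhds (ball_mem_nhds y (by positivity))
  obtain ⟨w, hwp, hwy⟩ :=
    (hclust.frequently (ball_mem_nhds p (by positivity : 0 < ε / 3))).and_eventually hnear |>.exists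
  calc dist y p ≤ dist w y + dist w (hK.nearestPoint hne w) + dist (hK.nearestPoint hne w) p := by
        linarith [dist_triangle y w (hK.nearestPoint hne w), dist_comm y w,
          dist_triangle y (hK.nearestPoint hne w) p]
    _ ≤ dist w y + (infDist y K + dist w y) + dist (hK.nearestPoint hne w) p := by
        rw [← hK.infDist_eq_dist_nearestPoint]
        gcongr
        exact infDist_le_infDist_add_dist
    _ < infDist y K + ε := by linarith

end NearestPoint

theorem notMem_medialAxis_of_lt_reach {K : Set (Euc D)} {y : Euc D}
    (h : ENNReal.ofReal (infDist y K) < reach K) : y ∉ medialAxis K :=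
  fun hy => h.not_ge (iInf₂_le y hy)

theorem eq_of_notMem_medialAxis {K : Set (Euc D)} {y p q : Euc D} (hy : y ∉ medialAxis K)
    (hp : p ∈ K) (hq : q ∈ K) (hpy : dist p y = infDist y K) (hqy : dist q y = infDist y K) :
    p = q := by
  by_contra h
  exact hy ⟨p, hp, q, hq, h, hpy, hqy⟩

theorem contractibleSpace_of_subset_closedBall_of_lt_reach {K : Set (Euc D)} (hK : IsCompact K)
    (hne : K.Nonempty) {z : Euc D} {r : ℝ} (hKr : K ⊆ closedBall z r)
    (hr : ENNReal.ofReal r < reach K) : ContractibleSpace K := by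
  set U := ⋃ x ∈ K, segment ℝ x z
  have hU : StarConvex ℝ z U :=
    starConvex_iUnion₂ fun x _ => (convex_segment x z).starConvex (right_mem_segment ℝ x z)
  have hKU : K ⊆ U := fun x hx => mem_biUnion hx (left_mem_segment ℝ x z)
  have hunique : ∀ y ∈ U, ∀ p ∈ K, infDist y K = dist y p → p = hK.nearestPoint hne y := by
    intro y hy p hp hpy
    obtain ⟨x, hx, hyx⟩ := mem_iUnion₂.1 hy
    have hyr : infDist y K ≤ r := calc
      infDist y K ≤ dist y x := infDist_le_dist_of_mem hx
      _ ≤ dist x z := by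
        linarith [dist_add_dist_of_mem_segment hyx, dist_comm x y, dist_nonneg (x := y) (y := z)]
      _ ≤ r := hKr hx
    refine eq_of_notMem_medialAxis
      (notMem_medialAxis_of_lt_reach ((ofReal_le_ofReal hyr).trans_lt hr)) hp
      (hK.nearestPoint_mem hne y) (by rw [dist_comm, hpy])
      (by rw [dist_comm, hK.infDist_eq_dist_nearestPoint])
  have : ContractibleSpace U := hU.contractibleSpace (hne.mono hKU)
  refine .of_retraction (X := U) ⟨fun x => ⟨x, hKU x.2⟩, by fun_prop⟩
    ⟨fun y => ⟨hK.nearestPoint hne y, hK.nearestPoint_mem hne y⟩,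
      (ContinuousOn.domRestrict fun y hy =>
        hK.continuousWithinAt_nearestPoint hne (hunique y hy)).subtype_mk _⟩ ?_
  refine ContinuousMap.ext fun x => Subtype.ext ?_
  exact (hunique x (hKU x.2) x x.2 (by simp [infDist_zero_of_mem x.2])).symm

/-- Proposition `thm:geometry:reach_vs_diameter`.
If `K ⊂ ℝ^D` is a nonempty compact set which is not contractible, then
`τ_K ≤ sqrt (D / (2 (D+1))) * diam K`. -/
theorem reach_le_sqrt_mul_diam (K : Set (Euc D)) (hK : IsCompact K) (hne : K.Nonempty)
    (hcontr : ¬ ContractibleSpace K) :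
    reach K ≤ ENNReal.ofReal (Real.sqrt (D / (2 * (D + 1))) * Metric.diam K) := by
  by_contra! h
  obtain ⟨z, hz⟩ := hK.exists_subset_closedBall_sqrt_mul_diam
  rw [finrank_euclideanSpace_fin] at hz
  exact hcontr (contractibleSpace_of_subset_closedBall_of_lt_reach hK hne hz h)

end
end

section
/- For every nonempty bounded set K ⊂ ℝ^D, the Hausdorff distance between K and its closed convex hull satisfies d_H(K, conv(K)) ≤ sqrt(D/(2(D+1))) · diam(K). -/
/-! By Carathéodory, a point `y` of the convex hull is a convex combination `∑ wᵢ zᵢ` of at most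
`D + 1` points of `K` with positive weights. The variance identity
`∑ᵢⱼ wᵢ wⱼ ‖zᵢ - zⱼ‖² = 2 ∑ᵢ wᵢ ‖zᵢ - y‖²`, together with `‖zᵢ - zⱼ‖ ≤ diam K` off the diagonal,
bounds the weighted mean of `‖zᵢ - y‖²` by `(1 - ∑ wᵢ²) diam² / 2`, and `∑ wᵢ² ≥ 1 / (D + 1)` by
Cauchy–Schwarz. Some `zᵢ` has `‖zᵢ - y‖²` at most this mean. -/

open Metric Set

noncomputable section

variable {D : ℕ}

open Finset
open scoped RealInnerProductSpace

section WeightedPairwiseDistances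

variable {α ι : Type*} {s : Finset ι} {w : ι → ℝ}

theorem one_div_card_le_sum_sq (hw : ∑ i ∈ s, w i = 1) : 1 / (#s : ℝ) ≤ ∑ i ∈ s, w i ^ 2 := by
  have := sq_sum_le_card_mul_sum_sq (s := s) (f := w)
  rw [hw, one_pow] at this
  exact div_le_of_le_mul₀ (Nat.cast_nonneg _) (sum_nonneg fun i _ => sq_nonneg _) (by linarith)

theorem sum_sum_mul_dist_sq_le [PseudoMetricSpace α] {z : ι → α} {d : ℝ}
    (hw₀ : ∀ i ∈ s, 0 ≤ w i) (hw : ∑ i ∈ s, w i = 1) (hd : ∀ i ∈ s, ∀ j ∈ s, dist (z i) (z j) ≤ d) :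
    ∑ i ∈ s, ∑ j ∈ s, w i * w j * dist (z i) (z j) ^ 2 ≤ d ^ 2 * (1 - ∑ i ∈ s, w i ^ 2) := by
  classical
  calc ∑ i ∈ s, ∑ j ∈ s, w i * w j * dist (z i) (z j) ^ 2
      ≤ ∑ i ∈ s, ∑ j ∈ s, w i * w j * (d ^ 2 - if i = j then d ^ 2 else 0) := by
        refine sum_le_sum fun i hi => sum_le_sum fun j hj => ?_
        gcongr
        · exact mul_nonneg (hw₀ i hi) (hw₀ j hj)
        split_ifs with hij
        · simp [hij]
        · simpa using pow_le_pow_left₀ dist_nonneg (hd i hi j hj) 2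
    _ = d ^ 2 * (1 - ∑ i ∈ s, w i ^ 2) := by
        simp only [mul_sub, sum_sub_distrib, mul_ite, mul_zero, sum_ite_eq, ← sum_mul]
        rw [← sum_mul_sum, hw, sum_ite_mem, Finset.inter_self, ← sum_mul]
        simp only [sq]
        ring

theorem sum_sum_mul_dist_sq_eq [NormedAddCommGroup α] [InnerProductSpace ℝ α] {z : ι → α}
    (hw : ∑ i ∈ s, w i = 1) :
    ∑ i ∈ s, ∑ j ∈ s, w i * w j * dist (z i) (z j) ^ 2 =
      2 * ∑ i ∈ s, w i * dist (z i) (∑ j ∈ s, w j • z j) ^ 2 := by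
  set y := ∑ j ∈ s, w j • z j
  have hy : ∑ i ∈ s, w i * ⟪z i, y⟫ = ‖y‖ ^ 2 := by
    simp only [← real_inner_self_eq_norm_sq, y, sum_inner, real_inner_smul_left]
  have hyy : ∑ i ∈ s, ∑ j ∈ s, w i * w j * ⟪z i, z j⟫ = ‖y‖ ^ 2 := by
    simp only [← hy, mul_assoc, ← mul_sum, y, inner_sum, real_inner_smul_right]
  have hright : ∀ v : ι → ℝ, ∑ i ∈ s, ∑ j ∈ s, w i * w j * v j = ∑ j ∈ s, w j * v j := fun v => by
    simp only [mul_assoc, ← mul_sum, ← sum_mul, hw, one_mul]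
  simp only [dist_eq_norm, norm_sub_sq_real, mul_add, mul_sub, sum_add_distrib, sum_sub_distrib,
    hright, mul_left_comm _ (2 : ℝ), ← mul_sum, hyy, hy, ← sum_mul, hw, mul_one]
  ring

theorem exists_dist_sq_le_of_sum_smul [NormedAddCommGroup α] [InnerProductSpace ℝ α]
    {z : ι → α} {d : ℝ} (hw₀ : ∀ i ∈ s, 0 < w i) (hw : ∑ i ∈ s, w i = 1)
    (hd : ∀ i ∈ s, ∀ j ∈ s, dist (z i) (z j) ≤ d) :
    ∃ i ∈ s, dist (z i) (∑ j ∈ s, w j • z j) ^ 2 ≤ (1 - 1 / #s) / 2 * d ^ 2 := by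
  have hvar : ∑ i ∈ s, w i * dist (z i) (∑ j ∈ s, w j • z j) ^ 2 ≤
      ∑ i ∈ s, w i * ((1 - 1 / #s) / 2 * d ^ 2) := by
    rw [← sum_mul, hw, one_mul]
    have := sum_sum_mul_dist_sq_le (fun i hi => (hw₀ i hi).le) hw hd
    have := mul_le_mul_of_nonneg_left (one_div_card_le_sum_sq hw) (sq_nonneg d)
    linarith [sum_sum_mul_dist_sq_eq (z := z) hw]
  have hs : s.Nonempty := nonempty_of_sum_ne_zero (hw ▸ one_ne_zero)
  obtain ⟨i, hi, hle⟩ := exists_le_of_sum_le hs hvar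
  exact ⟨i, hi, le_of_mul_le_mul_left hle (hw₀ i hi)⟩

end WeightedPairwiseDistances

theorem exists_dist_le_of_mem_convexHull {E : Type*} [NormedAddCommGroup E]
    [InnerProductSpace ℝ E] [FiniteDimensional ℝ E] {K : Set E} (hK : Bornology.IsBounded K) {y : E}
    (hy : y ∈ convexHull ℝ K) :
    ∃ x ∈ K, dist y x ≤
      √(Module.finrank ℝ E / (2 * (Module.finrank ℝ E + 1))) * diam K := by
  obtain ⟨ι, _, z, w, hzK, hz, hw₀, hw, rfl⟩ := eq_pos_convex_span_of_mem_convexHull hy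
  have hzK' (i : ι) : z i ∈ K := hzK ⟨i, rfl⟩
  obtain ⟨i, -, hi⟩ := exists_dist_sq_le_of_sum_smul (s := univ) (fun i _ => hw₀ i) hw
    fun i _ j _ => dist_le_diam_of_mem hK (hzK' i) (hzK' j)
  refine ⟨z i, hzK' i, ?_⟩
  set n := Module.finrank ℝ E
  have hcard : (Fintype.card ι : ℝ) ≤ n + 1 := by
    exact_mod_cast hz.card_le_finrank_succ.trans (by gcongr; exact Submodule.finrank_le _)
  have hcard₀ : (0 : ℝ) < Fintype.card ι := by exact_mod_cast Fintype.card_pos_iff.mpr ⟨i⟩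
  have hcoef : (1 - 1 / Fintype.card ι) / 2 ≤ (n : ℝ) / (2 * (n + 1)) := by
    calc (1 - 1 / Fintype.card ι) / 2 ≤ (1 - 1 / (n + 1 : ℝ)) / 2 := by gcongr
      _ = n / (2 * (n + 1)) := by field_simp; ring
  calc dist (∑ j, w j • z j) (z i) = √(dist (z i) (∑ j, w j • z j) ^ 2) := by
        rw [Real.sqrt_sq dist_nonneg, dist_comm]
    _ ≤ √(n / (2 * (n + 1)) * diam K ^ 2) := by
        gcongr
        exact hi.trans (by rw [card_univ]; gcongr)
    _ = √(n / (2 * (n + 1))) * diam K := by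
        rw [Real.sqrt_mul (by positivity), Real.sqrt_sq diam_nonneg]

theorem hausdorffDist_convexHull_le_general (K : Set (Euc D))
    (hbd : Bornology.IsBounded K) :
    Metric.hausdorffDist K (closure (convexHull ℝ K)) ≤
      Real.sqrt (D / (2 * (D + 1))) * Metric.diam K := by
  rw [hausdorffDist_closure₂]
  refine hausdorffDist_le_of_mem_dist (by positivity)
    (fun x hx => ⟨x, subset_convexHull ℝ K hx, by simp only [dist_self]; positivity⟩)
    fun y hy => ?_
  simpa only [finrank_euclideanSpace_fin] using exists_dist_le_of_mem_convexHull hbd hy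

/-- Lemma `thm:geometry:optimal_hull_inclusion`.
For every nonempty bounded `K ⊂ ℝ^D`, the Hausdorff distance between `K` and its closed convex
hull satisfies `d_H(K, conv K) ≤ sqrt (D / (2 (D+1))) * diam K`. -/
theorem hausdorffDist_convexHull_le (K : Set (Euc D)) (hne : K.Nonempty)
    (hbd : Bornology.IsBounded K) :
    Metric.hausdorffDist K (closure (convexHull ℝ K)) ≤
      Real.sqrt (D / (2 * (D + 1))) * Metric.diam K :=
  hausdorffDist_convexHull_le_general K hbd

end
end

section
/- If K ⊂ ℝ^D is a nonempty compact set that is not homotopy equivalent to a point (i.e. K is not contractible), then τ_K ≤ d_H(K, conv(K)). -/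
open Metric Set ENNReal Topology Filter

noncomputable section

variable {D : ℕ}

/-- If the closed convex hull avoids the medial axis, the nearest-point projection retracts
it onto `K`, so `K` is contractible. -/
lemma contractible_of_disjoint_medialAxis (K : Set (Euc D)) (hK : IsCompact K)
    (hne : K.Nonempty)
    (hdisj : ∀ z ∈ closure (convexHull ℝ K), z ∉ medialAxis K) :
    ContractibleSpace K := by
  set S := closure (convexHull ℝ K) with hSdef
  have hKS : K ⊆ S := (subset_convexHull ℝ K).trans subset_closure
  have hconv : Convex ℝ S := (convex_convexHull ℝ K).closure
  have hex : ∀ z : Euc D, ∃ p ∈ K, infDist z K = dist z p := fun z =>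
    hK.exists_infDist_eq_dist hne z
  choose f hfK hfd using hex
  -- uniqueness of the nearest point for `z ∈ S`
  have huniq : ∀ z ∈ S, ∀ p ∈ K, dist p z = infDist z K → p = f z := by
    intro z hz p hp hpd
    by_contra hpq
    exact hdisj z hz ⟨p, hp, f z, hfK z, hpq, hpd, by rw [dist_comm]; exact (hfd z).symm⟩
  -- continuity of the projection on `S`
  have hcont : ContinuousOn f S := by
    intro z hz
    refine hK.tendsto_nhds_of_unique_mapClusterPt
      (Filter.Eventually.of_forall fun x => hfK x) ?_
    intro p hp hcl
    refine huniq z hz p hp ?_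
    have hge : infDist z K ≤ dist p z := by
      rw [dist_comm]; exact infDist_le_dist_of_mem hp
    refine le_antisymm ?_ hge
    refine le_of_forall_pos_le_add fun ε hε => ?_
    have hε3 : (0:ℝ) < ε / 3 := by linarith
    have h1 : ∀ᶠ x in 𝓝[S] z, dist x z < ε / 3 := by
      have : ball z (ε / 3) ∈ 𝓝[S] z := nhdsWithin_le_nhds (ball_mem_nhds z hε3)
      exact Filter.eventually_iff_exists_mem.2 ⟨_, this, fun x hx => mem_ball.1 hx⟩
    have h2 : ∀ᶠ x in 𝓝[S] z, infDist x K < infDist z K + ε / 3 := by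
      have ht : Filter.Tendsto (fun x => infDist x K) (𝓝[S] z) (𝓝 (infDist z K)) :=
        ((continuous_infDist_pt K).tendsto z).mono_left nhdsWithin_le_nhds
      exact ht.eventually_lt_const (by linarith)
    have hfr : ∃ᶠ x in 𝓝[S] z, dist (f x) p < ε / 3 := by
      have := mapClusterPt_iff_frequently.1 hcl (ball p (ε / 3)) (ball_mem_nhds p hε3)
      exact this.mono fun x hx => mem_ball.1 hx
    obtain ⟨x, hx1, hx2, hx3⟩ := (hfr.and_eventually (h1.and h2)).exists
    have hdx : dist (f x) x = infDist x K := by rw [dist_comm]; exact (hfd x).symm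
    have key : dist p z ≤ dist p (f x) + dist (f x) x + dist x z := dist_triangle4 p (f x) x z
    rw [dist_comm p (f x), hdx] at key
    linarith [hx1, hx2, hx3, key]
  -- the projection as a continuous map `S → K`
  let F : C(S, K) := ⟨fun z => ⟨f z.1, hfK z.1⟩, (hcont.restrict).subtype_mk _⟩
  obtain ⟨x₀, hx₀⟩ := hne
  rw [contractible_iff_id_nullhomotopic]
  refine ⟨⟨x₀, hx₀⟩, ⟨?_⟩⟩
  have hmem : ∀ (t : unitInterval) (x : K), ((1 - t.1) • (x : Euc D) + t.1 • x₀) ∈ S :=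
    fun t x => hconv (hKS x.2) (hKS hx₀) (by linarith [t.2.2]) t.2.1 (by ring)
  have hfix : ∀ x ∈ K, f x = x := fun x hx =>
    (huniq x (hKS hx) x hx (by simp [infDist_zero_of_mem hx])).symm
  exact
    { toFun := fun p => F ⟨(1 - p.1.1) • (p.2 : Euc D) + p.1.1 • x₀, hmem p.1 p.2⟩
      continuous_toFun := by
        refine F.continuous.comp (Continuous.subtype_mk ?_ _)
        fun_prop
      map_zero_left := fun x => by
        refine Subtype.ext ?_
        show f ((1 - (0:ℝ)) • (x : Euc D) + (0:ℝ) • x₀) = (x : Euc D)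
        rw [show (1 - (0:ℝ)) • (x : Euc D) + (0:ℝ) • x₀ = (x : Euc D) by simp]
        exact hfix _ x.2
      map_one_left := fun x => by
        refine Subtype.ext ?_
        show f ((1 - (1:ℝ)) • (x : Euc D) + (1:ℝ) • x₀) = x₀
        rw [show (1 - (1:ℝ)) • (x : Euc D) + (1:ℝ) • x₀ = x₀ by simp]
        exact hfix _ hx₀ }

/-- Lemma `thm:geometry:reach_vs_hull`.
If `K ⊂ ℝ^D` is a nonempty compact set which is not contractible, then
`τ_K ≤ d_H(K, conv K)`. -/
theorem reach_le_hausdorffDist_convexHull (K : Set (Euc D)) (hK : IsCompact K)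
    (hne : K.Nonempty) (hcontr : ¬ ContractibleSpace K) :
    reach K ≤ ENNReal.ofReal (Metric.hausdorffDist K (closure (convexHull ℝ K))) := by
  set S := closure (convexHull ℝ K) with hSdef
  have hKS : K ⊆ S := (subset_convexHull ℝ K).trans subset_closure
  obtain ⟨z, hzS, hzm⟩ : ∃ z ∈ S, z ∈ medialAxis K := by
    by_contra h
    push_neg at h
    exact hcontr (contractible_of_disjoint_medialAxis K hK hne h)
  have h1 : reach K ≤ ENNReal.ofReal (infDist z K) := biInf_le _ hzm
  refine h1.trans (ENNReal.ofReal_le_ofReal ?_)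
  have hb : EMetric.hausdorffEdist S K ≠ ⊤ := by
    apply Metric.hausdorffEdist_ne_top_of_nonempty_of_bounded (hne.mono hKS) hne
    · exact (isBounded_convexHull.2 hK.isBounded).closure
    · exact hK.isBounded
  have := infDist_le_hausdorffDist_of_mem hzS hb
  rwa [hausdorffDist_comm] at this
end
end

section
/- Let 𝕏 ⊂ ℝ^D be a set of points and T = {T_x}_{x∈𝕏}, T̃ = {T̃_x}_{x∈𝕏} two families of linear subspaces of ℝ^D indexed by 𝕏. Assume 𝕏 is δ-sparse and T and T̃ are θ-close, in the sense that inf_{x≠y∈𝕏} ‖y−x‖ ≥ δ > 0 and sup_{x∈𝕏} ‖π_{T_x} − π_{T̃_x}‖_op ≤ sin θ. Then |1/τ̂(𝕏,T) − 1/τ̂(𝕏,T̃)| ≤ 2 sin θ / δ. -/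
/-!
The distance from `v` to a subspace `K` is `‖v - π_K v‖`, so moving from `T_x` to `T̃_x`
changes `d(y - x, T_x)` by at most `‖π_{T_x} - π_{T̃_x}‖ ‖y - x‖ ≤ sin θ ‖y - x‖`. Dividing by
`‖y - x‖² / 2` changes each term of the supremum defining `1/τ̂` by at most
`2 sin θ / ‖y - x‖ ≤ 2 sin θ / δ`, and the bound passes to the suprema.
-/

open Metric Set ENNReal

noncomputable section

variable {D : ℕ}

/-- The orthogonal projection onto a linear subspace `K ⊆ ℝ^D`, as an operator `ℝ^D → ℝ^D`. -/
def projOp (K : Submodule ℝ (Euc D)) : Euc D →L[ℝ] Euc D :=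
  K.subtypeL.comp (K.orthogonalProjection)

/-- The inverse `1/τ̂(X, T) = sup_{x ≠ y ∈ X} 2 d(y-x, T_x) / ‖y-x‖²` of the plug-in reach
estimator with a given family `T = {T_x}` of linear subspaces, computed in `[0, ∞]`. -/
def invTauHatFam (X : Set (Euc D)) (T : Euc D → Submodule ℝ (Euc D)) : ℝ≥0∞ :=
  ⨆ x ∈ X, ⨆ y ∈ X, ⨆ _ : x ≠ y,
    ENNReal.ofReal (2 * Metric.infDist (y - x) ↑(T x) / ‖y - x‖ ^ 2)

section InnerProductSpace

variable {𝕜 E : Type*} [RCLike 𝕜] [NormedAddCommGroup E] [InnerProductSpace 𝕜 E]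

theorem Submodule.infDist_eq_norm_sub_starProjection (K : Submodule 𝕜 E)
    [K.HasOrthogonalProjection] (v : E) : infDist v K = ‖v - K.starProjection v‖ := by
  rw [Submodule.starProjection_minimal, infDist_eq_iInf]
  simp only [dist_eq_norm]
  rfl

theorem Submodule.infDist_le_infDist_add_norm_sub_starProjection_mul (K K' : Submodule 𝕜 E)
    [K.HasOrthogonalProjection] [K'.HasOrthogonalProjection] (v : E) :
    infDist v K ≤ infDist v K' + ‖K.starProjection - K'.starProjection‖ * ‖v‖ := by
  rw [K.infDist_eq_norm_sub_starProjection, K'.infDist_eq_norm_sub_starProjection]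
  calc ‖v - K.starProjection v‖
      ≤ ‖v - K'.starProjection v‖ + ‖K'.starProjection v - K.starProjection v‖ :=
        norm_sub_le_norm_sub_add_norm_sub _ _ _
    _ = ‖v - K'.starProjection v‖ + ‖(K.starProjection - K'.starProjection) v‖ := by
        rw [sub_apply, norm_sub_rev (K.starProjection v)]
    _ ≤ _ := by gcongr; exact ContinuousLinearMap.le_opNorm _ _

end InnerProductSpace

theorem div_sq_le_div_sq_add_div {d d' r s δ : ℝ} (hδ : 0 < δ) (hδr : δ ≤ r) (hs : 0 ≤ s)
    (h : d ≤ d' + s * r) : d / r ^ 2 ≤ d' / r ^ 2 + s / δ := by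
  have hr : 0 < r := hδ.trans_le hδr
  calc d / r ^ 2 ≤ (d' + s * r) / r ^ 2 := by gcongr
    _ = d' / r ^ 2 + s / r := by field_simp
    _ ≤ d' / r ^ 2 + s / δ := by gcongr

theorem invTauHatFam_le_add (X : Set (Euc D)) (T T' : Euc D → Submodule ℝ (Euc D)) {δ s : ℝ}
    (hδ : 0 < δ) (hsparse : ∀ x ∈ X, ∀ y ∈ X, x ≠ y → δ ≤ ‖y - x‖)
    (hclose : ∀ x ∈ X, ‖projOp (T x) - projOp (T' x)‖ ≤ s) :
    invTauHatFam X T ≤ invTauHatFam X T' + ENNReal.ofReal (2 * s / δ) := by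
  refine iSup₂_le fun x hx => iSup₂_le fun y hy => iSup_le fun hxy => ?_
  have hs : 0 ≤ s := (norm_nonneg _).trans (hclose x hx)
  have hdist : infDist (y - x) (T x) ≤ infDist (y - x) (T' x) + s * ‖y - x‖ :=
    ((T x).infDist_le_infDist_add_norm_sub_starProjection_mul (T' x) (y - x)).trans
      (by gcongr; exact hclose x hx)
  have hterm : 2 * infDist (y - x) (T x) / ‖y - x‖ ^ 2
      ≤ 2 * infDist (y - x) (T' x) / ‖y - x‖ ^ 2 + 2 * s / δ :=
    div_sq_le_div_sq_add_div hδ (hsparse x hx y hy hxy) (by positivity) (by linarith)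
  calc ENNReal.ofReal (2 * infDist (y - x) (T x) / ‖y - x‖ ^ 2)
      ≤ ENNReal.ofReal (2 * infDist (y - x) (T' x) / ‖y - x‖ ^ 2) + ENNReal.ofReal (2 * s / δ) :=
        (ENNReal.ofReal_le_ofReal hterm).trans ENNReal.ofReal_add_le
    _ ≤ invTauHatFam X T' + ENNReal.ofReal (2 * s / δ) := by
        gcongr
        exact le_iSup₂_of_le x hx <| le_iSup₂_of_le y hy <| le_iSup_of_le hxy le_rfl

/-- Proposition `thm:tangent_stability`.
If `𝕏` is `δ`-sparse and the families `T`, `T̃` are `θ`-close (principal angles at most `θ`),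
then `|1/τ̂(𝕏,T) - 1/τ̂(𝕏,T̃)| ≤ 2 sin θ / δ`. -/
theorem invTauHat_stability (X : Set (Euc D)) (T T' : Euc D → Submodule ℝ (Euc D))
    (δ θ : ℝ) (hδ : 0 < δ)
    (hsparse : ∀ x ∈ X, ∀ y ∈ X, x ≠ y → δ ≤ ‖y - x‖)
    (hclose : ∀ x ∈ X, ‖projOp (T x) - projOp (T' x)‖ ≤ Real.sin θ) :
    (invTauHatFam X T - invTauHatFam X T') ⊔ (invTauHatFam X T' - invTauHatFam X T) ≤
      ENNReal.ofReal (2 * Real.sin θ / δ) := by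
  have hclose' : ∀ x ∈ X, ‖projOp (T' x) - projOp (T x)‖ ≤ Real.sin θ := fun x hx => by
    rw [norm_sub_rev]; exact hclose x hx
  refine sup_le ?_ ?_ <;> rw [tsub_le_iff_left]
  · exact invTauHatFam_le_add X T T' hδ hsparse hclose
  · exact invTauHatFam_le_add X T' T hδ hsparse hclose'

end
end

section
/- Let V ⊂ ℝ^D be a 2-dimensional affine subspace and q₁ ≠ q₂, z, x ∈ V. Let L be the line through q₁ and q₂. Assume x, z ∉ L and that the segment joining z and x intersects L. Let p ∈ ℝ^D be any point such that ‖p−q₁‖ = ‖z−q₁‖ and ‖p−q₂‖ = ‖z−q₂‖. Then ‖p−x‖ ≤ ‖z−x‖, and equality holds if and only if p = z. -/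
open Metric Set

open scoped RealInnerProductSpace

noncomputable section

variable {D : ℕ}

/-- The line through two distinct points `q₁, q₂`: `{q₁ + t (q₂ - q₁) : t ∈ ℝ}`. -/
def lineThrough (q₁ q₂ : Euc D) : Set (Euc D) :=
  {w | ∃ t : ℝ, w = q₁ + t • (q₂ - q₁)}

set_option maxHeartbeats 1000000 in
/-- Lemma `lem:geometry_plane_outpoint`.
Let `q₁ ≠ q₂, z, x` lie in a 2-dimensional affine subspace `V ⊆ ℝ^D`, let `L` be the line
through `q₁, q₂`, assume `x, z ∉ L` and that the segment joining `z` and `x` meets `L`.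
If `p ∈ ℝ^D` satisfies `‖p - q₁‖ = ‖z - q₁‖` and `‖p - q₂‖ = ‖z - q₂‖`, then
`‖p - x‖ ≤ ‖z - x‖`, with equality iff `p = z`. -/
theorem dist_le_of_reflect_across_line (V : AffineSubspace ℝ (Euc D))
    (hV : Module.finrank ℝ V.direction = 2)
    (q₁ q₂ z x : Euc D) (hq₁ : q₁ ∈ V) (hq₂ : q₂ ∈ V) (hz : z ∈ V) (hx : x ∈ V)
    (hne : q₁ ≠ q₂)
    (hxL : x ∉ lineThrough q₁ q₂) (hzL : z ∉ lineThrough q₁ q₂)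
    (hseg : (segment ℝ z x ∩ lineThrough q₁ q₂).Nonempty)
    (p : Euc D) (hp₁ : ‖p - q₁‖ = ‖z - q₁‖) (hp₂ : ‖p - q₂‖ = ‖z - q₂‖) :
    ‖p - x‖ ≤ ‖z - x‖ ∧ (‖p - x‖ = ‖z - x‖ ↔ p = z) := by
  simp only [lineThrough, Set.mem_setOf_eq] at hxL hzL
  set u : Euc D := q₂ - q₁ with hu_def
  set w : Euc D := z - q₁ with hw_def
  have hu : u ≠ 0 := sub_ne_zero.mpr (Ne.symm hne)
  -- linear independence of u, w
  have hli : LinearIndependent ℝ ![u, w] := by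
    rw [LinearIndependent.pair_iff]
    intro a b hab
    by_cases hb : b = 0
    · subst hb
      simp only [zero_smul, add_zero] at hab
      exact ⟨(smul_eq_zero.mp hab).resolve_right hu, rfl⟩
    · exfalso
      apply hzL
      refine ⟨b⁻¹ * (-a), ?_⟩
      have hbw : b • w = (-a) • u := by
        rw [neg_smul]
        linear_combination (norm := module) hab
      have hw' : w = (b⁻¹ * (-a)) • u := by
        rw [← smul_smul, ← hbw, inv_smul_smul₀ hb]
      have hzq : z = q₁ + w := by rw [hw_def]; abel
      rw [hzq, hw']
  -- span of u, w equals direction of V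
  have hspan : Submodule.span ℝ {u, w} = V.direction := by
    apply Submodule.eq_of_le_of_finrank_le
    · rw [Submodule.span_le]
      rintro v (rfl | rfl)
      · exact AffineSubspace.vsub_mem_direction hq₂ hq₁
      · exact AffineSubspace.vsub_mem_direction hz hq₁
    · rw [hV]
      have hfr := finrank_span_eq_card hli
      have hrange : Set.range ![u, w] = {u, w} := by
        simp [Matrix.range_cons, Matrix.range_empty, Set.pair_comm]
      rw [hrange] at hfr
      rw [hfr]
      simp
  -- decompose x - q₁
  have hxd : x - q₁ ∈ Submodule.span ℝ {u, w} := by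
    rw [hspan]; exact AffineSubspace.vsub_mem_direction hx hq₁
  obtain ⟨α, β, hx'⟩ := Submodule.mem_span_pair.mp hxd
  have hzw : z = q₁ + w := by rw [hw_def]; abel
  have hxw : x = q₁ + (α • u + β • w) := by rw [hx']; abel
  -- from the segment hypothesis, β < 0
  obtain ⟨y, hy1, hy2⟩ := hseg
  simp only [lineThrough, Set.mem_setOf_eq] at hy2
  obtain ⟨a, b, ha, hb, hab, hy⟩ := hy1
  obtain ⟨t, hyL⟩ := hy2
  have hcoef : (b * α - t) • u + (a + β * b) • w = 0 := by
    have hyy : a • z + b • x = q₁ + t • u := by rw [hy, hyL]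
    rw [hzw, hxw] at hyy
    have hq : (a + b) • q₁ = q₁ := by rw [hab, one_smul]
    linear_combination (norm := module) hyy - hq
  obtain ⟨h1, h2⟩ := LinearIndependent.pair_iff.mp hli _ _ hcoef
  have hbne : b ≠ 0 := by
    intro hb0
    rw [hb0, mul_zero, add_zero] at h2
    rw [hb0, h2] at hab
    norm_num at hab
  have hβne : β ≠ 0 := by
    intro hβ0
    exact hxL ⟨α, by rw [hxw, hβ0, zero_smul, add_zero]⟩
  have hβ : β < 0 := by
    rcases lt_or_gt_of_ne hβne with h | h
    · exact h
    · exfalso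
      have hbpos : 0 < b := lt_of_le_of_ne hb (Ne.symm hbne)
      nlinarith
  -- inner product facts
  have e1 : ‖(p - z) + w‖ ^ 2 = ‖w‖ ^ 2 := by
    have h3 : p - z + w = p - q₁ := by rw [hw_def]; abel
    rw [h3, hp₁]
  have e2 : ‖(p - z) + (w - u)‖ ^ 2 = ‖w - u‖ ^ 2 := by
    have h3 : p - z + (w - u) = p - q₂ := by rw [hw_def, hu_def]; abel
    have h4 : w - u = z - q₂ := by rw [hw_def, hu_def]; abel
    rw [h3, h4, hp₂, ← h4]
  rw [norm_add_sq_real] at e1 e2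
  have hpw : 2 * ⟪p - z, w⟫ = -‖p - z‖ ^ 2 := by linarith
  have hpu : ⟪p - z, u⟫ = 0 := by
    rw [inner_sub_right] at e2
    linarith
  -- the key identity
  have hkey : ‖p - x‖ ^ 2 = ‖z - x‖ ^ 2 + β * ‖p - z‖ ^ 2 := by
    have hzx : z - x = (1 - β) • w - α • u := by
      rw [hzw, hxw]
      match_scalars <;> ring
    have hpx : p - x = (p - z) + (z - x) := by abel
    rw [hpx, norm_add_sq_real, hzx, inner_sub_right, inner_smul_right, inner_smul_right,
      hpu]
    have hpw' : ⟪p - z, w⟫ = -(‖p - z‖ ^ 2) / 2 := by linarith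
    rw [hpw']
    ring
  have hpznn : (0:ℝ) ≤ ‖p - z‖ := norm_nonneg _
  have hpxnn : (0:ℝ) ≤ ‖p - x‖ := norm_nonneg _
  have hzxnn : (0:ℝ) ≤ ‖z - x‖ := norm_nonneg _
  have hsqle : ‖p - x‖ ^ 2 ≤ ‖z - x‖ ^ 2 := by
    nlinarith [sq_nonneg (‖p - z‖), mul_nonpos_of_nonpos_of_nonneg hβ.le (sq_nonneg (‖p - z‖))]
  have hle : ‖p - x‖ ≤ ‖z - x‖ := (pow_le_pow_iff_left₀ hpxnn hzxnn (by norm_num)).mp hsqle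
  refine ⟨hle, ?_, ?_⟩
  · intro heq
    have heq2 : ‖p - x‖ ^ 2 = ‖z - x‖ ^ 2 := by rw [heq]
    have h0 : β * ‖p - z‖ ^ 2 = 0 := by linarith
    have hsq : ‖p - z‖ ^ 2 = 0 := (mul_eq_zero.mp h0).resolve_left hβne
    have hz0 : ‖p - z‖ = 0 := (pow_eq_zero_iff (two_ne_zero)).mp hsq
    exact sub_eq_zero.mp (norm_eq_zero.mp hz0)
  · intro hpz
    rw [hpz]
end
end

section
/- Let A ⊂ ℝ^D be a closed set with positive reach τ_A > 0, and let B₁,…,B_k be finitely many closed balls, where B_i has radius r_i < τ_A for each i. If the intersection B₁ ∩ … ∩ B_k ∩ A is nonempty, then its reach satisfies τ_{B₁∩…∩B_k∩A} > min_{1≤i≤k} r_i. -/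
/-!
Below the reach of `A`, nearest points on `A` are unique and `infDist · A` grows at unit rate away
from them; a maximum-principle argument turns this into Federer's estimate
`d(o, A) (2τ - d(o, A)) ≤ h²` for the midpoint `o` of two points of `A` at distance `2h`. By
Apollonius, the estimate also keeps the nearest point on `A` of `o` inside every ball of radius
`≤ τ` containing both points, so `d(o, S) = d(o, A)` for `S = B₁ ∩ ⋯ ∩ B_k ∩ A`. If `z` has two
nearest points `p, q` on `S` at distance `d`, Apollonius gives `|z - o|² = d² - h²`, and
`d ≤ |z - o| + d(o, A)` together with the estimate forces `d ≥ τ` whenever `max rᵢ ≤ τ ≤ τ_A`.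
-/

open Metric Set ENNReal

noncomputable section

variable {D : ℕ}

lemma IsClosed.exists_gt_infDist_forall_dist_lt_of_unique {X : Type*} [PseudoMetricSpace X]
    [ProperSpace X] {A : Set X} (hA : IsClosed A) {w ξ : X}
    (huniq : ∀ a ∈ A, dist w a = infDist w A → a = ξ) {η : ℝ} (hη : 0 < η) :
    ∃ m > infDist w A, ∀ a ∈ A, dist w a < m → dist a ξ < η := by
  set K := A \ ball ξ η
  have hK : ∀ a ∈ A, ¬ dist a ξ < η → a ∈ K := fun a ha hfar => ⟨ha, hfar⟩
  rcases K.eq_empty_or_nonempty with hKe | hKne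
  · refine ⟨infDist w A + 1, by linarith, fun a ha _ => ?_⟩
    by_contra hfar
    simpa [hKe] using hK a ha hfar
  obtain ⟨a₀, ha₀K, hwa₀⟩ := (hA.sdiff isOpen_ball).exists_infDist_eq_dist hKne w
  have hne : a₀ ≠ ξ := fun h => ha₀K.2 (h ▸ mem_ball_self hη)
  refine ⟨dist w a₀, (infDist_le_dist_of_mem ha₀K.1).lt_of_ne fun h => hne (huniq a₀ ha₀K.1 h.symm),
    fun a ha hwa => ?_⟩
  by_contra hfar
  exact (hwa.trans_le (hwa₀ ▸ infDist_le_dist_of_mem (hK a ha hfar))).false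

lemma infDist_midpoint_le_half_dist {E : Type*} [NormedAddCommGroup E] [NormedSpace ℝ E]
    {A : Set E} {p : E} (hp : p ∈ A) (q : E) : infDist (midpoint ℝ p q) A ≤ dist p q / 2 := by
  have := infDist_le_dist_of_mem (x := midpoint ℝ p q) hp
  rwa [dist_midpoint_left, Real.norm_two, inv_mul_eq_div] at this

section InnerProductSpace

variable {E : Type*} [NormedAddCommGroup E] [InnerProductSpace ℝ E]

lemma le_sq_dist_lineMap_of_dist_le {w ξ ξ' : E} {t : ℝ} (ht : 0 ≤ t) (hξ : dist w ξ ≤ dist w ξ') :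
    t ^ 2 * dist w ξ ^ 2 - (t - 1) * dist ξ ξ' ^ 2 ≤ dist (AffineMap.lineMap ξ w t) ξ' ^ 2 := by
  have hx : AffineMap.lineMap ξ w t - ξ' = t • (w - ξ) - (ξ' - ξ) := by
    rw [AffineMap.lineMap_apply_module']; abel
  have hw : w - ξ' = (w - ξ) - (ξ' - ξ) := by abel
  rw [dist_eq_norm, dist_eq_norm, hw] at hξ
  rw [dist_eq_norm, dist_comm, dist_eq_norm, dist_eq_norm, hx]
  set u := w - ξ
  set v := ξ' - ξ
  clear_value u v
  have hsq : ‖u‖ ^ 2 ≤ ‖u - v‖ ^ 2 := by gcongr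
  rw [norm_sub_sq_real] at hsq
  rw [norm_sub_sq_real, norm_smul, real_inner_smul_left, Real.norm_eq_abs, abs_of_nonneg ht]
  nlinarith

lemma exists_infDist_add_mul_dist_le [ProperSpace E] {A : Set E} (hA : IsClosed A) {w : E}
    (hw : 0 < infDist w A)
    (huniq : ∀ a ∈ A, ∀ b ∈ A, dist w a = infDist w A → dist w b = infDist w A → a = b)
    {lam ε₀ : ℝ} (hlam0 : 0 ≤ lam) (hlam1 : lam < 1) (hε₀ : 0 < ε₀) :
    ∃ x, 0 < dist x w ∧ dist x w ≤ ε₀ ∧ infDist w A + lam * dist x w ≤ infDist x A := by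
  have hAne : A.Nonempty := nonempty_iff_ne_empty.2 fun h => by simp [h] at hw
  obtain ⟨ξ, hξA, hwξ⟩ := hA.exists_infDist_eq_dist hAne w
  set ρ := infDist w A
  -- Nearest points of points near `w` are `η`-close to `ξ`; the choice `η = (1 - lam) ρ` makes the
  -- loss `ε η² / ρ` in `le_sq_dist_lineMap_of_dist_le` smaller than `(ρ + ε)² - (ρ + lam ε)²`.
  obtain ⟨m, hmρ, hm⟩ := hA.exists_gt_infDist_forall_dist_lt_of_unique
    (fun a ha hwa => huniq a ha ξ hξA hwa hwξ.symm) (η := (1 - lam) * ρ) (by nlinarith)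
  set ε := min ε₀ ((m - ρ) / 3)
  have hε : 0 < ε := lt_min hε₀ (by linarith)
  set x := AffineMap.lineMap ξ w (1 + ε / ρ)
  have hxw : dist x w = ε := by
    rw [dist_lineMap_right, dist_comm ξ w, ← hwξ, show 1 - (1 + ε / ρ) = -(ε / ρ) by ring,
      norm_neg, Real.norm_of_nonneg (by positivity)]
    field_simp
  obtain ⟨ξ', hξ'A, hxξ'⟩ := hA.exists_infDist_eq_dist hAne x
  have hξ'ξ : dist ξ' ξ < (1 - lam) * ρ := by
    refine hm ξ' hξ'A ?_
    calc dist w ξ' ≤ dist w x + dist x ξ' := dist_triangle _ _ _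
      _ ≤ ε + (ρ + ε) := by
        rw [dist_comm, hxw, ← hxξ']
        gcongr
        exact hxw ▸ infDist_le_infDist_add_dist
      _ < m := by linarith [min_le_right ε₀ ((m - ρ) / 3)]
  have hsq := le_sq_dist_lineMap_of_dist_le (t := 1 + ε / ρ) (by positivity)
    (hwξ ▸ infDist_le_dist_of_mem hξ'A : dist w ξ ≤ dist w ξ')
  rw [← hwξ, ← hxξ'] at hsq
  have hlead : (1 + ε / ρ) ^ 2 * ρ ^ 2 = (ρ + ε) ^ 2 := by field_simp
  have hloss : (1 + ε / ρ - 1) * dist ξ ξ' ^ 2 ≤ ε * (1 - lam) ^ 2 * ρ := by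
    calc (1 + ε / ρ - 1) * dist ξ ξ' ^ 2 ≤ ε / ρ * ((1 - lam) * ρ) ^ 2 := by
          rw [dist_comm, add_sub_cancel_left]; gcongr
      _ = ε * (1 - lam) ^ 2 * ρ := by field_simp
  refine ⟨x, hxw ▸ hε, hxw ▸ min_le_left _ _, ?_⟩
  rw [hxw]
  refine (pow_le_pow_iff_left₀ (by positivity) infDist_nonneg two_ne_zero).mp ?_
  have : 0 ≤ (1 - lam) * ε * (1 + lam) * (ρ + ε) := by
    have := hlam1.le; positivity
  nlinarith

end InnerProductSpace

lemma eq_of_dist_eq_infDist_of_lt_reach {A : Set (Euc D)} {x a b : Euc D}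
    (hx : ENNReal.ofReal (infDist x A) < reach A) (ha : a ∈ A) (hb : b ∈ A)
    (hxa : dist x a = infDist x A) (hxb : dist x b = infDist x A) : a = b := by
  by_contra hab
  have hmed : x ∈ medialAxis A := ⟨a, ha, b, hb, hab, dist_comm x a ▸ hxa, dist_comm x b ▸ hxb⟩
  exact hx.not_ge (iInf₂_le x hmed)

lemma exists_mem_closedBall_infDist_add_mul_le {A : Set (Euc D)} (hA : IsClosed A) {τ : ℝ}
    (hτ : ENNReal.ofReal τ ≤ reach A) {o : Euc D} {s lam : ℝ} (ho : 0 < infDist o A)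
    (hs : 0 ≤ s) (hsτ : infDist o A + s < τ) (hlam0 : 0 ≤ lam) (hlam1 : lam < 1) :
    ∃ w ∈ closedBall o s, infDist o A + lam * s ≤ infDist w A := by
  set F : Euc D → ℝ := fun y => infDist y A - lam * dist y o
  obtain ⟨w, hwo, hwmax⟩ := (isCompact_closedBall o s).exists_isMaxOn
    (nonempty_closedBall.2 hs) (by fun_prop : Continuous F).continuousOn
  have hFw : infDist o A ≤ infDist w A - lam * dist w o := by
    simpa [F] using hwmax (mem_closedBall_self hs)
  rw [mem_closedBall] at hwo
  rcases hwo.eq_or_lt with hws | hws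
  · exact ⟨w, hws.le, by rw [← hws]; linarith⟩
  -- An interior maximiser lies off `A` and below the reach, where moving away from its nearest
  -- point gains more than the penalty `lam * dist · o` costs.
  exfalso
  have hw0 : 0 < infDist w A := by nlinarith [dist_nonneg (x := w) (y := o)]
  have hwτ : infDist w A < τ := by linarith [infDist_le_infDist_add_dist (s := A) (x := w) (y := o)]
  have hwreach : ENNReal.ofReal (infDist w A) < reach A :=
    ((ENNReal.ofReal_lt_ofReal_iff (by linarith)).2 hwτ).trans_le hτ
  obtain ⟨x, hxw0, hxws, hgain⟩ := exists_infDist_add_mul_dist_le hA hw0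
    (fun a ha b hb => eq_of_dist_eq_infDist_of_lt_reach hwreach ha hb)
    (lam := (1 + lam) / 2) (by linarith) (by linarith) (sub_pos.2 hws)
  have hxo : dist x o ≤ dist w o + dist x w := by linarith [dist_triangle x w o]
  have hFx : F x ≤ F w := hwmax (mem_closedBall.2 (by linarith))
  simp only [F] at hFx
  nlinarith

lemma sq_infDist_midpoint_add_mul_le {A : Set (Euc D)} (hA : IsClosed A) {τ : ℝ}
    (hτ : ENNReal.ofReal τ ≤ reach A) {p q : Euc D} (hp : p ∈ A) (hq : q ∈ A) {s lam : ℝ}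
    (ho : 0 < infDist (midpoint ℝ p q) A) (hs : 0 ≤ s)
    (hsτ : infDist (midpoint ℝ p q) A + s < τ) (hlam0 : 0 ≤ lam) (hlam1 : lam < 1) :
    (infDist (midpoint ℝ p q) A + lam * s) ^ 2 ≤ s ^ 2 + (dist p q / 2) ^ 2 := by
  obtain ⟨w, hwo, hw⟩ := exists_mem_closedBall_infDist_add_mul_le hA hτ ho hs hsτ hlam0 hlam1
  have hwp := hw.trans (infDist_le_dist_of_mem hp)
  have hwq := hw.trans (infDist_le_dist_of_mem hq)
  have hapol := EuclideanGeometry.dist_sq_add_dist_sq_eq_two_mul_dist_midpoint_sq_add_half_dist_sq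
    w p q
  rw [mem_closedBall] at hwo
  have : 0 ≤ infDist (midpoint ℝ p q) A + lam * s := by positivity
  nlinarith [dist_nonneg (x := w) (y := midpoint ℝ p q)]

lemma infDist_midpoint_mul_le {A : Set (Euc D)} (hA : IsClosed A) {τ : ℝ}
    (hτ : ENNReal.ofReal τ ≤ reach A) {p q : Euc D} (hp : p ∈ A) (hq : q ∈ A) :
    infDist (midpoint ℝ p q) A * (2 * τ - infDist (midpoint ℝ p q) A) ≤ (dist p q / 2) ^ 2 := by
  set d₀ := infDist (midpoint ℝ p q) A
  have hd₀h : d₀ ≤ dist p q / 2 := infDist_midpoint_le_half_dist hp q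
  rcases (infDist_nonneg : 0 ≤ d₀).eq_or_lt with hd₀ | hd₀
  · simp only [d₀, ← hd₀, zero_mul]; positivity
  rcases le_or_gt τ d₀ with hτd₀ | hτd₀
  · nlinarith
  -- Apply the previous estimate with `s = lam * (τ - d₀)` and let `lam → 1`.
  set g : ℝ → ℝ := fun lam => (d₀ + lam * (lam * (τ - d₀))) ^ 2 - (lam * (τ - d₀)) ^ 2
  have hg : Ioo 0 1 ⊆ {lam | g lam ≤ (dist p q / 2) ^ 2} := fun lam ⟨h0, h1⟩ => by
    have := sq_infDist_midpoint_add_mul_le hA hτ hp hq hd₀ (s := lam * (τ - d₀)) (by nlinarith)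
      (by nlinarith) h0.le h1
    simp only [mem_ofPred_eq, g]
    linarith
  have h1 := (isClosed_le (by fun_prop) continuous_const).closure_subset_iff.2 hg
  rw [closure_Ioo zero_ne_one] at h1
  have := h1 (right_mem_Icc.2 zero_le_one)
  simp only [mem_ofPred_eq, g] at this
  linarith

lemma dist_le_of_dist_midpoint_eq_infDist {A : Set (Euc D)} (hA : IsClosed A) {τ : ℝ}
    (hτ : ENNReal.ofReal τ ≤ reach A) {p q c π : Euc D} {r : ℝ} (hp : p ∈ A) (hq : q ∈ A)
    (hpc : dist p c ≤ r) (hqc : dist q c ≤ r) (hrτ : r ≤ τ)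
    (hπ : dist (midpoint ℝ p q) π = infDist (midpoint ℝ p q) A) : dist π c ≤ r := by
  set o := midpoint ℝ p q
  set d₀ := infDist o A
  set h := dist p q / 2 with hh
  have hkey : d₀ * (2 * τ - d₀) ≤ h ^ 2 := infDist_midpoint_mul_le hA hτ hp hq
  have hd₀ : 0 ≤ d₀ := infDist_nonneg
  have hd₀h : d₀ ≤ h := infDist_midpoint_le_half_dist hp q
  have hhr : h ≤ r := by rw [hh]; linarith [dist_triangle_right p q c]
  have hapol := EuclideanGeometry.dist_sq_add_dist_sq_eq_two_mul_dist_midpoint_sq_add_half_dist_sq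
    c p q
  rw [dist_comm c p, dist_comm c q, dist_comm c o, ← hh] at hapol
  have hoc : dist o c ≤ r - d₀ := by
    refine (pow_le_pow_iff_left₀ dist_nonneg (by linarith) two_ne_zero).mp ?_
    nlinarith [mul_le_mul_of_nonneg_left hrτ hd₀, mul_le_mul hpc hpc dist_nonneg (by linarith),
      mul_le_mul hqc hqc dist_nonneg (by linarith)]
  linarith [dist_triangle π o c, dist_comm o π]

lemma ofReal_le_reach_of_subset {A S : Set (Euc D)} (hA : IsClosed A) {τ : ℝ}
    (hτ : ENNReal.ofReal τ ≤ reach A) (hSA : S ⊆ A)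
    (hS : ∀ p ∈ S, ∀ q ∈ S, ∃ π ∈ S, dist (midpoint ℝ p q) π = infDist (midpoint ℝ p q) A) :
    ENNReal.ofReal τ ≤ reach S := by
  refine le_iInf₂ fun z ⟨p, hp, q, hq, hpq, hpz, hqz⟩ => ENNReal.ofReal_le_ofReal ?_
  obtain ⟨π, hπS, hoπ⟩ := hS p hp q hq
  have hapol := EuclideanGeometry.dist_sq_add_dist_sq_eq_two_mul_dist_midpoint_sq_add_half_dist_sq
    z p q
  rw [dist_comm z p, dist_comm z q, hpz, hqz] at hapol
  have hkey := infDist_midpoint_mul_le hA hτ (hSA hp) (hSA hq)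
  have hd₀h := infDist_midpoint_le_half_dist (hSA hp) q
  have hdπ := (infDist_le_dist_of_mem (x := z) hπS).trans (dist_triangle z (midpoint ℝ p q) π)
  rw [hoπ] at hdπ
  have hh : 0 < dist p q / 2 := half_pos (dist_pos.2 hpq)
  set d := infDist z S
  set d₀ := infDist (midpoint ℝ p q) A
  set h := dist p q / 2
  set a := dist z (midpoint ℝ p q)
  have ha : 0 ≤ a := dist_nonneg
  have hd : 0 ≤ d := infDist_nonneg
  have hhd : h ≤ d := by nlinarith
  by_contra! hdτ
  -- With `x = d - a ≤ d₀ < τ`, monotonicity of `x ↦ x * (2τ - x)` on `[0, τ]` and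
  -- `h² = (d - a)(d + a)` turn `hkey` into `2τ ≤ 2d`.
  have hx : 0 < d - a := by nlinarith
  have hmono : (d - a) * (2 * τ - (d - a)) ≤ d₀ * (2 * τ - d₀) := by
    nlinarith [mul_nonneg (sub_nonneg.2 (show d - a ≤ d₀ by linarith))
      (show 0 ≤ 2 * τ - d₀ - (d - a) by linarith)]
  have : (d - a) * (2 * τ - (d - a)) ≤ (d - a) * (d + a) := by nlinarith
  nlinarith [le_of_mul_le_mul_left this hx]

lemma ofReal_le_reach_iInter_closedBall_inter {ι : Type*} {A : Set (Euc D)} (hA : IsClosed A)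
    {τ : ℝ} (hτ : ENNReal.ofReal τ ≤ reach A) (c : ι → Euc D) (r : ι → ℝ) (hr : ∀ i, r i ≤ τ) :
    ENNReal.ofReal τ ≤ reach ((⋂ i, closedBall (c i) (r i)) ∩ A) := by
  refine ofReal_le_reach_of_subset hA hτ inter_subset_right fun p ⟨hpB, hp⟩ q ⟨hqB, hq⟩ => ?_
  obtain ⟨π, hπ, hoπ⟩ := hA.exists_infDist_eq_dist ⟨p, hp⟩ (midpoint ℝ p q)
  refine ⟨π, ⟨mem_iInter.2 fun i => mem_closedBall.2 ?_, hπ⟩, hoπ.symm⟩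
  exact dist_le_of_dist_midpoint_eq_infDist hA hτ hp hq (mem_iInter.1 hpB i)
    (mem_iInter.1 hqB i) (hr i) hoπ.symm

theorem reach_inter_balls_finite_general (A : Set (Euc D)) (hA : IsClosed A)
    (k : ℕ) (hk : 0 < k) (c : Fin k → Euc D) (r : Fin k → ℝ)
    (hr : ∀ i, ENNReal.ofReal (r i) < reach A) :
    (⨅ i, ENNReal.ofReal (r i)) < reach ((⋂ i, Metric.closedBall (c i) (r i)) ∩ A) := by
  have : Nonempty (Fin k) := Fin.pos_iff_nonempty.1 hk
  obtain ⟨j, hj⟩ := Finite.exists_max r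
  obtain ⟨τ, -, hjτ, hτ⟩ := ENNReal.lt_iff_exists_real_btwn.1 (hr j)
  calc ⨅ i, ENNReal.ofReal (r i) ≤ ENNReal.ofReal (r j) := iInf_le _ j
    _ < ENNReal.ofReal τ := hjτ
    _ ≤ _ := ofReal_le_reach_iInter_closedBall_inter hA hτ.le c r
      fun i => (hj i).trans (ENNReal.ofReal_lt_ofReal_iff'.1 hjτ).1.le

/-- Lemma `lem:geometry_reach_intersection_balls` (i).
If `A` is closed with reach `τ_A > 0` and `B₁, …, B_k` are finitely many closed balls of radii
`r_i < τ_A` such that `B₁ ∩ … ∩ B_k ∩ A ≠ ∅`, then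
`τ_{B₁ ∩ … ∩ B_k ∩ A} > min_i r_i`. -/
theorem reach_inter_balls_finite (A : Set (Euc D)) (hA : IsClosed A) (h₀ : 0 < reach A)
    (k : ℕ) (hk : 0 < k) (c : Fin k → Euc D) (r : Fin k → ℝ)
    (hr : ∀ i, ENNReal.ofReal (r i) < reach A)
    (hne : ((⋂ i, Metric.closedBall (c i) (r i)) ∩ A).Nonempty) :
    (⨅ i, ENNReal.ofReal (r i)) < reach ((⋂ i, Metric.closedBall (c i) (r i)) ∩ A) :=
  reach_inter_balls_finite_general A hA k hk c r hr

end
end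

section
/- Let V and W be real Hilbert spaces and B : V × V → W a continuous bilinear map, and set λ_max = sup_{v∈V, ‖v‖=1} ‖B(v,v)‖. Then for all unit vectors v, w ∈ V, ‖B(w,w) − 2⟨v,w⟩² B(v,v)‖ ≤ (3 − 2⟨v,w⟩²) λ_max. -/
/-!
Write `t = ⟪v, w⟫`, `u = w - t v` and `z = 2 t v - w`. Expanding bilinearly,
`B(w,w) - 2t² B(v,v) = 2 B(u,u) - B(z,z)`, and since `v` is a unit vector, `‖u‖² = 1 - t²`
while `z`, the reflection of `w` in the line through `v`, is again a unit vector.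
As `‖B(x,x)‖ ≤ λ_max ‖x‖²` by homogeneity, the triangle inequality gives
`2 λ_max (1 - t²) + λ_max`.
-/

open scoped RealInnerProductSpace

namespace ContinuousLinearMap

section Diagonal

variable {E F : Type*} [NormedAddCommGroup E] [NormedSpace ℝ E]
  [NormedAddCommGroup F] [NormedSpace ℝ F] (B : E →L[ℝ] E →L[ℝ] F)

theorem norm_apply_self_smul (r : ℝ) (x : E) : ‖B (r • x) (r • x)‖ = r ^ 2 * ‖B x x‖ := by
  rw [map_smul, map_smul, smul_apply, smul_smul, norm_smul, Real.norm_eq_abs, abs_mul_self, sq]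

theorem norm_apply_self_le_mul_sq {c : ℝ} (hc : ∀ u : E, ‖u‖ = 1 → ‖B u u‖ ≤ c) (x : E) :
    ‖B x x‖ ≤ c * ‖x‖ ^ 2 := by
  rcases eq_or_ne x 0 with rfl | hx
  · simp
  have hx' : ‖x‖ ≠ 0 := norm_ne_zero_iff.mpr hx
  have hunit : ‖‖x‖⁻¹ • x‖ = 1 := by
    rw [norm_smul, norm_inv, norm_norm, inv_mul_cancel₀ hx']
  calc ‖B x x‖ = ‖x‖ ^ 2 * ‖B (‖x‖⁻¹ • x) (‖x‖⁻¹ • x)‖ := by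
        rw [← norm_apply_self_smul, smul_inv_smul₀ hx']
    _ ≤ ‖x‖ ^ 2 * c := by gcongr; exact hc _ hunit
    _ = c * ‖x‖ ^ 2 := mul_comm _ _

theorem bddAbove_range_norm_apply_self_unit :
    BddAbove (Set.range fun u : {u : E // ‖u‖ = 1} => ‖B u.1 u.1‖) := by
  refine ⟨‖B‖, ?_⟩
  rintro _ ⟨⟨u, hu⟩, rfl⟩
  simpa [hu] using B.le_opNorm₂ u u

theorem norm_apply_self_le_iSup_mul_sq (x : E) :
    ‖B x x‖ ≤ (⨆ u : {u : E // ‖u‖ = 1}, ‖B u.1 u.1‖) * ‖x‖ ^ 2 :=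
  B.norm_apply_self_le_mul_sq
    (fun u hu => le_ciSup (B.bddAbove_range_norm_apply_self_unit) ⟨u, hu⟩) x

theorem apply_self_sub_smul_apply_self_eq (t : ℝ) (v w : E) :
    B w w - (2 * t ^ 2) • B v v = (2 : ℝ) • B (w - t • v) (w - t • v)
      - B ((2 * t) • v - w) ((2 * t) • v - w) := by
  simp only [map_sub, map_smul, sub_apply, smul_apply, smul_sub, smul_smul]
  module

end Diagonal

end ContinuousLinearMap

section UnitVectors

variable {E : Type*} [NormedAddCommGroup E] [InnerProductSpace ℝ E] {v : E}

theorem norm_sub_inner_smul_sq_of_norm_eq_one (hv : ‖v‖ = 1) (w : E) :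
    ‖w - ⟪v, w⟫ • v‖ ^ 2 = ‖w‖ ^ 2 - ⟪v, w⟫ ^ 2 := by
  rw [norm_sub_sq_real, real_inner_smul_right, norm_smul, real_inner_comm, Real.norm_eq_abs,
    mul_pow, sq_abs, hv]
  ring

theorem norm_two_inner_smul_sub_of_norm_eq_one (hv : ‖v‖ = 1) (w : E) :
    ‖(2 * ⟪v, w⟫) • v - w‖ = ‖w‖ := by
  refine (sq_eq_sq₀ (norm_nonneg _) (norm_nonneg _)).mp ?_
  rw [norm_sub_sq_real, real_inner_smul_left, norm_smul, Real.norm_eq_abs, mul_pow, sq_abs, hv]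
  ring

end UnitVectors

theorem bilinear_diag_bound_general {V W : Type*}
    [NormedAddCommGroup V] [InnerProductSpace ℝ V]
    [NormedAddCommGroup W] [InnerProductSpace ℝ W]
    (B : V →L[ℝ] V →L[ℝ] W) (lmax : ℝ)
    (hlmax : lmax = ⨆ v : {v : V // ‖v‖ = 1}, ‖B v.1 v.1‖)
    (v w : V) (hv : ‖v‖ = 1) (hw : ‖w‖ = 1) :
    ‖B w w - (2 * ⟪v, w⟫ ^ 2) • B v v‖ ≤ (3 - 2 * ⟪v, w⟫ ^ 2) * lmax := by
  have hB : ∀ x, ‖B x x‖ ≤ lmax * ‖x‖ ^ 2 := hlmax ▸ B.norm_apply_self_le_iSup_mul_sq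
  have hu := norm_sub_inner_smul_sq_of_norm_eq_one hv w
  have hz := norm_two_inner_smul_sub_of_norm_eq_one hv w
  rw [hw, one_pow] at hu
  rw [hw] at hz
  calc ‖B w w - (2 * ⟪v, w⟫ ^ 2) • B v v‖
      ≤ ‖(2 : ℝ) • B (w - ⟪v, w⟫ • v) (w - ⟪v, w⟫ • v)‖
          + ‖B ((2 * ⟪v, w⟫) • v - w) ((2 * ⟪v, w⟫) • v - w)‖ := by
        rw [B.apply_self_sub_smul_apply_self_eq]
        exact norm_sub_le _ _
    _ ≤ 2 * (lmax * (1 - ⟪v, w⟫ ^ 2)) + lmax * 1 ^ 2 := by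
        rw [norm_smul, Real.norm_two, ← hu, ← hz]
        gcongr <;> exact hB _
    _ = (3 - 2 * ⟪v, w⟫ ^ 2) * lmax := by ring

/-- Lemma `lem:estimator_bilinear` (i).
Let `V, W` be real Hilbert spaces and `B : V × V → W` a continuous bilinear map, and let
`λ_max = sup_{‖v‖ = 1} ‖B(v,v)‖`. Then for all unit vectors `v, w`,
`‖B(w,w) - 2 ⟪v,w⟫² B(v,v)‖ ≤ (3 - 2 ⟪v,w⟫²) λ_max`. -/
theorem bilinear_diag_bound {V W : Type*}
    [NormedAddCommGroup V] [InnerProductSpace ℝ V] [CompleteSpace V]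
    [NormedAddCommGroup W] [InnerProductSpace ℝ W] [CompleteSpace W]
    [Nontrivial V]
    (B : V →L[ℝ] V →L[ℝ] W) (lmax : ℝ)
    (hlmax : lmax = ⨆ v : {v : V // ‖v‖ = 1}, ‖B v.1 v.1‖)
    (v w : V) (hv : ‖v‖ = 1) (hw : ‖w‖ = 1) :
    ‖B w w - (2 * ⟪v, w⟫ ^ 2) • B v v‖ ≤ (3 - 2 * ⟪v, w⟫ ^ 2) * lmax :=
  bilinear_diag_bound_general B lmax hlmax v w hv hw
end

section
/- Let V and W be real Hilbert spaces and B : V × V → W a continuous bilinear map, and set λ_max = sup_{v∈V, ‖v‖=1} ‖B(v,v)‖. Let v ∈ V be a unit vector such that ⟨B(v,v), B(v,ṽ) + B(ṽ,v)⟩ = 0 for every ṽ ∈ V with ṽ ⊥ v. Then for every unit vector w ∈ V, ‖B(w,w)‖ ≥ ⟨v,w⟩² ‖B(v,v)‖ − (1 − ⟨v,w⟩²) λ_max. Moreover, the orthogonality hypothesis is automatically satisfied whenever v is a unit vector achieving ‖B(v,v)‖ = λ_max. -/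
open scoped RealInnerProductSpace

noncomputable section

/-- Lemma `lem:estimator_bilinear` (ii).
Let `V, W` be real Hilbert spaces and `B : V × V → W` a continuous bilinear map, and let
`λ_max = sup_{‖v‖ = 1} ‖B(v,v)‖`. If `v` is a unit vector with
`⟪B(v,v), B(v,u) + B(u,v)⟫ = 0` for every `u ⊥ v`, then for every unit vector `w`,
`‖B(w,w)‖ ≥ ⟪v,w⟫² ‖B(v,v)‖ - (1 - ⟪v,w⟫²) λ_max`; moreover the orthogonality hypothesis
holds automatically whenever `‖B(v,v)‖ = λ_max`. -/
theorem bilinear_diag_lower_bound {V W : Type*}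
    [NormedAddCommGroup V] [InnerProductSpace ℝ V] [CompleteSpace V]
    [NormedAddCommGroup W] [InnerProductSpace ℝ W] [CompleteSpace W]
    [Nontrivial V]
    (B : V →L[ℝ] V →L[ℝ] W) (lmax : ℝ)
    (hlmax : lmax = ⨆ v : {v : V // ‖v‖ = 1}, ‖B v.1 v.1‖) :
    (∀ v : V, ‖v‖ = 1 →
      (∀ u : V, ⟪u, v⟫ = 0 → ⟪B v v, B v u + B u v⟫ = 0) →
      ∀ w : V, ‖w‖ = 1 →
        ⟪v, w⟫ ^ 2 * ‖B v v‖ - (1 - ⟪v, w⟫ ^ 2) * lmax ≤ ‖B w w‖) ∧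
    (∀ v : V, ‖v‖ = 1 → ‖B v v‖ = lmax →
      ∀ u : V, ⟪u, v⟫ = 0 → ⟪B v v, B v u + B u v⟫ = 0) := by
  -- the unit sphere is nonempty
  have hne : Nonempty {v : V // ‖v‖ = 1} := by
    obtain ⟨x, hx⟩ := exists_ne (0 : V)
    exact ⟨⟨‖x‖⁻¹ • x, norm_smul_inv_norm hx⟩⟩
  have hbdd : BddAbove (Set.range fun v : {v : V // ‖v‖ = 1} => ‖B v.1 v.1‖) := by
    refine ⟨‖B‖, ?_⟩
    rintro _ ⟨⟨x, hx⟩, rfl⟩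
    have h1 : ‖B x x‖ ≤ ‖B x‖ * ‖x‖ := (B x).le_opNorm x
    have h2 : ‖B x‖ ≤ ‖B‖ * ‖x‖ := B.le_opNorm x
    simp only [hx, mul_one] at h1 h2
    exact h1.trans h2
  have hle : ∀ x : V, ‖x‖ = 1 → ‖B x x‖ ≤ lmax := by
    intro x hx
    rw [hlmax]
    exact le_ciSup hbdd ⟨x, hx⟩
  have hlmax0 : 0 ≤ lmax := le_trans (norm_nonneg _) (hle hne.some.1 hne.some.2)
  have hquad : ∀ x : V, ‖B x x‖ ≤ lmax * ‖x‖ ^ 2 := by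
    intro x
    rcases eq_or_ne x 0 with rfl | hx
    · simp
    · have hx1 : ‖‖x‖⁻¹ • x‖ = 1 := norm_smul_inv_norm hx
      have h := hle _ hx1
      rw [map_smul, map_smul, ContinuousLinearMap.smul_apply, norm_smul, norm_smul,
        norm_inv, norm_norm] at h
      have hxp : 0 < ‖x‖ := norm_pos_iff.mpr hx
      have h' : ‖x‖⁻¹ * (‖x‖⁻¹ * ‖B x x‖) ≤ lmax := h
      have := mul_le_mul_of_nonneg_left h' (le_of_lt (mul_pos hxp hxp))
      calc ‖B x x‖ = ‖x‖ * ‖x‖ * (‖x‖⁻¹ * (‖x‖⁻¹ * ‖B x x‖)) := by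
            field_simp
        _ ≤ ‖x‖ * ‖x‖ * lmax := this
        _ = lmax * ‖x‖ ^ 2 := by ring
  constructor
  · -- part (i)
    intro v hv hortho w hw
    set c : ℝ := ⟪v, w⟫ with hc
    set u : V := w - c • v with hu
    have huv : ⟪u, v⟫ = 0 := by
      simp only [hu, inner_sub_left, real_inner_smul_left,
        real_inner_self_eq_norm_sq, hv]
      rw [hc, real_inner_comm w v]
      ring
    have hα := hortho u huv
    have hw' : w = c • v + u := by rw [hu]; abel
    have hnu : ‖u‖ ^ 2 = 1 - c ^ 2 := by
      have h1 : ‖u‖ ^ 2 = ⟪u, u⟫ := (real_inner_self_eq_norm_sq u).symm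
      rw [h1, hu]
      simp only [inner_sub_left, inner_sub_right, real_inner_smul_left,
        real_inner_smul_right, real_inner_self_eq_norm_sq, hv, hw,
        norm_smul, Real.norm_eq_abs, mul_pow, sq_abs]
      rw [hc, real_inner_comm w v]
      ring
    have hexp : B w w = c ^ 2 • B v v + c • (B v u + B u v) + B u u := by
      rw [hw']
      simp only [map_add, map_smul, ContinuousLinearMap.add_apply,
        ContinuousLinearMap.smul_apply, smul_smul, smul_add]
      rw [sq]
      abel
    have hinner : ⟪B v v, B w w⟫ = c ^ 2 * ‖B v v‖ ^ 2 + ⟪B v v, B u u⟫ := by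
      rw [hexp]
      simp only [inner_add_right, real_inner_smul_right, hα,
        real_inner_self_eq_norm_sq]
      ring
    have h1 : ⟪B v v, B w w⟫ ≤ ‖B v v‖ * ‖B w w‖ := real_inner_le_norm _ _
    have h2 : -(‖B v v‖ * ‖B u u‖) ≤ ⟪B v v, B u u⟫ :=
      neg_le_of_abs_le (abs_real_inner_le_norm _ _)
    have h3 : ‖B u u‖ ≤ lmax * (1 - c ^ 2) := by
      have := hquad u
      rwa [hnu] at this
    have hc2 : c ^ 2 ≤ 1 := by
      have h := abs_real_inner_le_norm v w
      rw [hv, hw, mul_one] at h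
      nlinarith [sq_abs c, sq_nonneg (|c| - 1), abs_nonneg c]
    rcases eq_or_lt_of_le (norm_nonneg (B v v)) with hA | hA
    · have : c ^ 2 * ‖B v v‖ - (1 - c ^ 2) * lmax ≤ 0 := by nlinarith
      exact this.trans (norm_nonneg _)
    · have key : ‖B v v‖ * (c ^ 2 * ‖B v v‖ - (1 - c ^ 2) * lmax)
          ≤ ‖B v v‖ * ‖B w w‖ := by nlinarith
      exact le_of_mul_le_mul_left key hA
  · -- part (ii)
    intro v hv hmax u huv
    set A : W := B v v with hA
    set C : W := B v u + B u v with hC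
    set D : W := B u u with hD
    set a1 : ℝ := ⟪A, C⟫ with ha1
    set r : ℝ := ‖u‖ ^ 2 with hr
    -- the polynomial remainder
    set g : ℝ → ℝ := fun t =>
      2 * lmax ^ 2 * r - (‖C‖ ^ 2 + 2 * ⟪A, D⟫) - 2 * ⟪C, D⟫ * t
        + (lmax ^ 2 * r ^ 2 - ‖D‖ ^ 2) * t ^ 2 with hg
    have hpos : ∀ t : ℝ, 2 * a1 * t ≤ t ^ 2 * g t := by
      intro t
      have hnorm : ‖v + t • u‖ ^ 2 = 1 + t ^ 2 * r := by
        rw [← real_inner_self_eq_norm_sq]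
        simp only [inner_add_left, inner_add_right, real_inner_smul_left,
          real_inner_smul_right, real_inner_self_eq_norm_sq, hv,
          norm_smul, Real.norm_eq_abs, mul_pow, sq_abs]
        rw [real_inner_comm u v, huv, hr]
        ring
      have hBexp : B (v + t • u) (v + t • u) = A + t • C + (t ^ 2) • D := by
        simp only [map_add, map_smul, ContinuousLinearMap.add_apply,
          ContinuousLinearMap.smul_apply, smul_smul, smul_add, hA, hC, hD]
        rw [sq]
        abel
      have hq := hquad (v + t • u)
      rw [hBexp, hnorm] at hq
      have hnn : 0 ≤ 1 + t ^ 2 * r := by positivity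
      have hsq : ‖A + t • C + (t ^ 2) • D‖ ^ 2 ≤ lmax ^ 2 * (1 + t ^ 2 * r) ^ 2 := by
        nlinarith [norm_nonneg (A + t • C + (t ^ 2) • D), hq]
      have hexp2 : ‖A + t • C + (t ^ 2) • D‖ ^ 2
          = ‖A‖ ^ 2 + 2 * a1 * t + (‖C‖ ^ 2 + 2 * ⟪A, D⟫) * t ^ 2
            + 2 * ⟪C, D⟫ * t ^ 3 + ‖D‖ ^ 2 * t ^ 4 := by
        rw [← real_inner_self_eq_norm_sq]
        simp only [inner_add_left, inner_add_right, real_inner_smul_left,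
          real_inner_smul_right, real_inner_self_eq_norm_sq,
          norm_smul, Real.norm_eq_abs, mul_pow, sq_abs]
        rw [ha1, real_inner_comm A C, real_inner_comm A D, real_inner_comm C D]
        ring
      rw [hexp2] at hsq
      have hAn : ‖A‖ = lmax := hmax
      rw [hAn] at hsq
      have hid : t ^ 2 * g t - 2 * a1 * t
          = lmax ^ 2 * (1 + t ^ 2 * r) ^ 2
            - (lmax ^ 2 + 2 * a1 * t + (‖C‖ ^ 2 + 2 * ⟪A, D⟫) * t ^ 2
              + 2 * ⟪C, D⟫ * t ^ 3 + ‖D‖ ^ 2 * t ^ 4) := by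
        simp only [hg]
        ring
      linarith [hsq, hid]
    have hgc : Continuous g := by
      rw [hg]
      exact ((continuous_const.sub (continuous_const.mul continuous_id)).add
        (continuous_const.mul (continuous_pow 2)))
    have htend : Filter.Tendsto (fun t : ℝ => t * g t) (nhds 0) (nhds 0) := by
      have h0 : Filter.Tendsto (fun t : ℝ => t * g t) (nhds 0) (nhds (0 * g 0)) :=
        ((continuous_id.mul hgc).tendsto 0)
      simpa using h0
    have hle0 : 2 * a1 ≤ 0 := by
      refine ge_of_tendsto (htend.mono_left nhdsWithin_le_nhds :
        Filter.Tendsto (fun t : ℝ => t * g t) (nhdsWithin 0 (Set.Ioi 0)) (nhds 0)) ?_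
      filter_upwards [self_mem_nhdsWithin] with t ht
      have ht' : (0 : ℝ) < t := ht
      have hp := hpos t
      have e1 : t ^ 2 * g t = (t * g t) * t := by ring
      rw [e1] at hp
      have hp' : (2 * a1) * t ≤ (t * g t) * t := by linarith
      exact le_of_mul_le_mul_right hp' ht'
    have hge0 : 0 ≤ 2 * a1 := by
      refine le_of_tendsto (htend.mono_left nhdsWithin_le_nhds :
        Filter.Tendsto (fun t : ℝ => t * g t) (nhdsWithin 0 (Set.Iio 0)) (nhds 0)) ?_
      filter_upwards [self_mem_nhdsWithin] with t ht
      have ht' : t < (0 : ℝ) := ht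
      have h1 : (t * g t) * (-t) ≤ (2 * a1) * (-t) := by
        have e1 : (t * g t) * (-t) = -(t ^ 2 * g t) := by ring
        have e2 : (2 * a1) * (-t) = -(2 * a1 * t) := by ring
        rw [e1, e2]
        linarith [hpos t]
      exact le_of_mul_le_mul_right h1 (by linarith : (0:ℝ) < -t)
    have : a1 = 0 := by linarith
    exact this

end
end

section
/- Let M ⊂ ℝ^D be a compact d-dimensional submanifold with 0 < H^d(M) < ∞, let B ⊂ ℝ^D be a Borel set, and let Φ : ℝ^D → ℝ^D be a global diffeomorphism such that Φ restricted to the complement of B is the identity map and sup_x ‖d_xΦ − I_D‖_op ≤ 2^{1/d} − 1. Then H^d(Φ(M)) ≤ 2 H^d(M) and TV(λ_M, λ_{Φ(M)}) ≤ 12 λ_M(B). -/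
open Metric Set ENNReal MeasureTheory

noncomputable section

variable {D : ℕ}

/-- `M ⊆ ℝ^D` is a `C^k` embedded `d`-dimensional submanifold without boundary. -/
def IsSubmanifold (k d : ℕ) (M : Set (Euc D)) : Prop :=
  ∀ x ∈ M, ∃ (u : Set (Euc d)) (v : Set (Euc D)) (ψ : Euc d → Euc D) (φ : Euc D → Euc d),
    IsOpen u ∧ IsOpen v ∧ x ∈ v ∧ ContDiffOn ℝ k ψ u ∧
    (∀ y ∈ u, Function.Injective (fderiv ℝ ψ y)) ∧
    Set.BijOn ψ u (M ∩ v) ∧ ContinuousOn φ (M ∩ v) ∧ ∀ y ∈ u, φ (ψ y) = y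

/-- The total variation distance between two measures:
`TV(P, P') = sup_{A measurable} |P(A) - P'(A)|`. -/
def tvDist {Ω : Type*} [MeasurableSpace Ω] (P P' : Measure Ω) : ℝ :=
  ⨆ s : {s : Set Ω // MeasurableSet s}, |(P s.1).toReal - (P' s.1).toReal|

/-- The uniform probability distribution `λ_S = H^d(· ∩ S) / H^d(S)` on a set `S ⊆ ℝ^D`. -/
def uniformOn (d : ℕ) (S : Set (Euc D)) : Measure (Euc D) :=
  (μH[(d : ℝ)] S)⁻¹ • μH[(d : ℝ)].restrict S

/-!
Since `‖dΦ - I‖ ≤ 2^{1/d} - 1`, the map `Φ` is `2^{1/d}`-Lipschitz and therefore at most doubles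
`H^d`. Injectivity forces `Φ(B) ⊆ B`, so `M` and `Φ(M)` coincide outside `B` while
`H^d(Φ(M) ∩ B) ≤ 2 H^d(M ∩ B)`. Writing both uniform distributions of a set `A` through the common
mass `H^d(A ∩ M \ B)` and the masses inside `B`, their difference is a multiple of `λ_M(B)`.
-/

open ProbabilityTheory

lemma lipschitzWith_of_norm_fderiv_sub_id_le {E : Type*} [NormedAddCommGroup E]
    [NormedSpace ℝ E] {f : E → E} (hf : Differentiable ℝ f) {c : ℝ}
    (h : ∀ x, ‖fderiv ℝ f x - ContinuousLinearMap.id ℝ E‖ ≤ c) :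
    LipschitzWith (1 + c).toNNReal f := by
  refine lipschitzWith_of_nnnorm_fderiv_le hf fun x ↦ ?_
  rw [← NNReal.coe_le_coe, coe_nnnorm]
  calc ‖fderiv ℝ f x‖
      ≤ ‖ContinuousLinearMap.id ℝ E‖ + ‖fderiv ℝ f x - ContinuousLinearMap.id ℝ E‖ :=
        norm_le_norm_add_norm_sub' _ _
    _ ≤ 1 + c := add_le_add ContinuousLinearMap.norm_id_le (h x)
    _ ≤ (1 + c).toNNReal := Real.le_coe_toNNReal _

lemma hausdorffMeasure_image_le_two_mul {E : Type*} [NormedAddCommGroup E] [NormedSpace ℝ E]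
    [MeasurableSpace E] [BorelSpace E] {f : E → E} (hf : Differentiable ℝ f) {d : ℝ} (hd : 0 < d)
    (h : ∀ x, ‖fderiv ℝ f x - ContinuousLinearMap.id ℝ E‖ ≤ 2 ^ d⁻¹ - 1) (s : Set E) :
    μH[d] (f '' s) ≤ 2 * μH[d] s := by
  have hlip := lipschitzWith_of_norm_fderiv_sub_id_le hf h
  rw [add_sub_cancel] at hlip
  have hK : ((2 ^ d⁻¹ : ℝ).toNNReal : ℝ≥0∞) ^ d = 2 := by
    rw [← ENNReal.ofReal.eq_def, ENNReal.ofReal_rpow_of_nonneg (by positivity) hd.le,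
      ← Real.rpow_mul zero_le_two, inv_mul_cancel₀ hd.ne', Real.rpow_one, ENNReal.ofReal_ofNat]
  simpa only [hK] using hlip.hausdorffMeasure_image_le hd.le s

section IdentityOffB

variable {α : Type*} {f : α → α} {B : Set α}

lemma mapsTo_of_injective_of_eqOn_compl (hf : f.Injective) (hid : ∀ x ∉ B, f x = x) :
    MapsTo f B B := by
  intro x hx
  by_contra hfx
  exact hfx (by rwa [hf (hid _ hfx)])

lemma image_inter_subset_image_inter_of_eqOn_compl (hid : ∀ x ∉ B, f x = x) (s : Set α) :
    f '' s ∩ B ⊆ f '' (s ∩ B) := by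
  rintro _ ⟨⟨x, hxs, rfl⟩, hfxB⟩
  by_cases hxB : x ∈ B
  · exact ⟨x, ⟨hxs, hxB⟩, rfl⟩
  · exact absurd (hid x hxB ▸ hfxB) hxB

lemma image_sdiff_eq_sdiff_of_eqOn_compl (hf : f.Injective) (hid : ∀ x ∉ B, f x = x)
    (s : Set α) : f '' s \ B = s \ B := by
  ext y
  constructor
  · rintro ⟨⟨x, hxs, rfl⟩, hfxB⟩
    have hxB : x ∉ B := fun hxB ↦ hfxB (mapsTo_of_injective_of_eqOn_compl hf hid hxB)
    rw [hid x hxB]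
    exact ⟨hxs, hxB⟩
  · rintro ⟨hys, hyB⟩
    exact ⟨⟨y, hys, hid y hyB⟩, hyB⟩

end IdentityOffB

/-- In the application `a, c` are the masses of `A ∩ S` inside and outside `B`, `b, e` those of `S`,
and the primed letters refer to `S'`, which has the same mass `c` of `A` outside `B`. -/
lemma abs_div_sub_div_le_of_le_two_mul {a a' c b b' e : ℝ} (ha : 0 ≤ a) (hab : a ≤ b)
    (ha' : 0 ≤ a') (hab' : a' ≤ b') (hc : 0 ≤ c) (hce : c ≤ e) (hbb' : b' ≤ 2 * b) :
    |(a + c) / (b + e) - (a' + c) / (b' + e)| ≤ 12 * (b / (b + e)) := by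
  have hb := ha.trans hab
  have hb' := ha'.trans hab'
  have he := hc.trans hce
  obtain hm | hm := (add_nonneg hb he).eq_or_lt'
  · have ha'0 : a' = 0 := by linarith
    have hc0 : c = 0 := by linarith
    simp [hm, ha'0, hc0]
  by_cases hm' : b' + e = 0
  · have hc0 : c = 0 := by linarith
    rw [hm', _root_.div_zero, sub_zero, hc0, add_zero, abs_of_nonneg (div_nonneg ha hm.le)]
    linarith [div_le_div_of_nonneg_right hab hm.le, div_nonneg hb hm.le]
  replace hm' : 0 < b' + e := (add_nonneg hb' he).lt_of_ne' hm'
  rw [div_sub_div _ _ hm.ne' hm'.ne', abs_div, abs_of_pos (mul_pos hm hm'),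
    div_le_iff₀ (mul_pos hm hm')]
  calc _ ≤ 12 * b * (b' + e) := abs_le.mpr ⟨?_, ?_⟩
    _ = 12 * (b / (b + e)) * ((b + e) * (b' + e)) := by field_simp
  · nlinarith [mul_nonneg ha hb', mul_nonneg ha he, mul_nonneg hc hb', mul_nonneg hb hb',
      mul_nonneg hb he, mul_nonneg hb (sub_nonneg.2 hab'), mul_nonneg hb (sub_nonneg.2 hce),
      mul_nonneg he (sub_nonneg.2 hab'), mul_nonneg he (sub_nonneg.2 hbb')]
  · nlinarith [mul_nonneg hb ha', mul_nonneg hb hc, mul_nonneg he ha', mul_nonneg hb hb',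
      mul_nonneg hb he, mul_nonneg hb' (sub_nonneg.2 hab), mul_nonneg he (sub_nonneg.2 hab),
      mul_nonneg hb' (sub_nonneg.2 hce), mul_nonneg he (sub_nonneg.2 hbb')]

lemma toReal_cond_apply {Ω : Type*} [MeasurableSpace Ω] (μ : Measure Ω) (S : Set Ω)
    {A : Set Ω} (hA : MeasurableSet A) : (μ[A|S]).toReal = μ.real (S ∩ A) / μ.real S := by
  rw [cond_apply' hA, ENNReal.toReal_mul, ENNReal.toReal_inv, inv_mul_eq_div]
  rfl

theorem tvDist_cond_le {Ω : Type*} [MeasurableSpace Ω] (μ : Measure Ω) {S S' B : Set Ω}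
    (hB : MeasurableSet B) (hS : μ S ≠ ∞) (hsdiff : S' \ B = S \ B)
    (hinter : μ (S' ∩ B) ≤ 2 * μ (S ∩ B)) :
    tvDist μ[|S] μ[|S'] ≤ 12 * (μ[B|S]).toReal := by
  have hSB : μ (S ∩ B) ≠ ∞ := measure_ne_top_of_subset inter_subset_left hS
  have hSdB : μ (S \ B) ≠ ∞ := measure_ne_top_of_subset sdiff_subset hS
  have hS' : μ S' ≠ ∞ := by
    refine measure_ne_top_of_subset (inter_union_sdiff S' B).ge (measure_union_ne_top ?_ ?_)
    · exact ne_top_of_le_ne_top (mul_ne_top ofNat_ne_top hSB) hinter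
    · rwa [hsdiff]
  have hinter_real : μ.real (S' ∩ B) ≤ 2 * μ.real (S ∩ B) := by
    simpa [Measure.real] using ENNReal.toReal_mono (mul_ne_top ofNat_ne_top hSB) hinter
  have hsplit : ∀ T A, μ T ≠ ∞ →
      μ.real (T ∩ A) = μ.real (T ∩ A ∩ B) + μ.real (T \ B ∩ A) := fun T A hT ↦ by
    rw [sdiff_inter_right_comm, measureReal_inter_add_sdiff hB
      (measure_ne_top_of_subset inter_subset_left hT)]
  refine Real.iSup_le (fun ⟨A, hA⟩ ↦ ?_) (by positivity)
  rw [toReal_cond_apply μ _ hA, toReal_cond_apply μ _ hA, toReal_cond_apply μ _ hB,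
    hsplit S A hS, hsplit S' A hS', hsdiff, ← measureReal_inter_add_sdiff hB hS,
    ← measureReal_inter_add_sdiff hB hS', hsdiff]
  exact abs_div_sub_div_le_of_le_two_mul measureReal_nonneg
    (measureReal_mono (inter_subset_inter_left _ inter_subset_left) hSB) measureReal_nonneg
    (measureReal_mono (inter_subset_inter_left _ inter_subset_left)) measureReal_nonneg
    (measureReal_mono inter_subset_left hSdB) hinter_real

theorem tv_uniform_of_diffeo_general (d : ℕ) (hd : 0 < d) (M B : Set (Euc D))
    (hfin : μH[(d : ℝ)] M < ⊤)
    (hB : MeasurableSet B)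
    (Φ Ψ : Euc D → Euc D) (hΦ : ContDiff ℝ 1 Φ)
    (hlinv : Function.LeftInverse Ψ Φ)
    (hid : ∀ x ∉ B, Φ x = x)
    (hder : ∀ x, ‖fderiv ℝ Φ x - ContinuousLinearMap.id ℝ (Euc D)‖ ≤
      (2 : ℝ) ^ ((d : ℝ)⁻¹) - 1) :
    μH[(d : ℝ)] (Φ '' M) ≤ 2 * μH[(d : ℝ)] M ∧
    tvDist (uniformOn d M) (uniformOn d (Φ '' M)) ≤ 12 * (uniformOn d M B).toReal := by
  have himage : ∀ s, μH[(d : ℝ)] (Φ '' s) ≤ 2 * μH[(d : ℝ)] s :=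
    hausdorffMeasure_image_le_two_mul (hΦ.differentiable one_ne_zero) (Nat.cast_pos.mpr hd) hder
  refine ⟨himage M, tvDist_cond_le _ hB hfin.ne
    (image_sdiff_eq_sdiff_of_eqOn_compl hlinv.injective hid M) ?_⟩
  exact (measure_mono (image_inter_subset_image_inter_of_eqOn_compl hid M)).trans (himage _)

/-- Lemma `total_variation_between_uniforms`.
Let `M ⊂ ℝ^D` be a compact `d`-dimensional submanifold with `0 < H^d(M) < ∞`, `B` a Borel
set, and `Φ : ℝ^D → ℝ^D` a global diffeomorphism equal to the identity outside `B` with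
`‖dΦ - I_D‖_op ≤ 2^{1/d} - 1` everywhere. Then `H^d(Φ(M)) ≤ 2 H^d(M)` and
`TV(λ_M, λ_{Φ(M)}) ≤ 12 λ_M(B)`. -/
theorem tv_uniform_of_diffeo (d : ℕ) (hd : 0 < d) (M B : Set (Euc D))
    (hM : IsSubmanifold 1 d M) (hMc : IsCompact M)
    (hpos : 0 < μH[(d : ℝ)] M) (hfin : μH[(d : ℝ)] M < ⊤)
    (hB : MeasurableSet B)
    (Φ Ψ : Euc D → Euc D) (hΦ : ContDiff ℝ 1 Φ) (hΨ : ContDiff ℝ 1 Ψ)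
    (hlinv : Function.LeftInverse Ψ Φ) (hrinv : Function.RightInverse Ψ Φ)
    (hid : ∀ x ∉ B, Φ x = x)
    (hder : ∀ x, ‖fderiv ℝ Φ x - ContinuousLinearMap.id ℝ (Euc D)‖ ≤
      (2 : ℝ) ^ ((d : ℝ)⁻¹) - 1) :
    μH[(d : ℝ)] (Φ '' M) ≤ 2 * μH[(d : ℝ)] M ∧
    tvDist (uniformOn d M) (uniformOn d (Φ '' M)) ≤ 12 * (uniformOn d M B).toReal :=
  tv_uniform_of_diffeo_general d hd M B hfin hB Φ Ψ hΦ hlinv hid hder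

end
end

section
/- Let M, M' ⊂ ℝ^D be two compact d-dimensional C¹ submanifolds without boundary, and let x ∈ M ∩ M' be such that T_xM ≠ T_xM'. Then there exists r > 0 such that the set A = M ∩ M' ∩ B̄(x,r) satisfies H^d(A) = 0 (so in particular λ_M(A) = λ_{M'}(A) = 0). -/
open Metric Set ENNReal MeasureTheory

noncomputable section

variable {D : ℕ}

/-- Tangent set of `M` at `x`: velocities at time `0` of curves through `x` drawn on `M`.
For a `C¹` submanifold, this is the tangent space `T_x M`. -/
def TangentSetAt (M : Set (Euc D)) (x : Euc D) : Set (Euc D) :=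
  {v | ∃ γ : ℝ → Euc D, (∀ t, γ t ∈ M) ∧ γ 0 = x ∧ HasDerivAt γ v 0}

/-! Near `x`, `M` is the image of a `C¹` immersion `ψ`, and `M'` is fixed pointwise by a
strictly differentiable map `G` whose differential has range `T_x M'` (compose a chart of `M'` with
a local inverse of its projection to the chart domain). Hence `ψ⁻¹ M'` lies in the fiber of
`y ↦ ψ y - G (ψ y)`, whose differential `(id - DG) ∘ Dψ` is nonzero because `T_x M ≠ T_x M'` are
subspaces of the same dimension. After a change of coordinates tangent to the identity, such a
fiber lies in a hyperplane, so it has Hausdorff dimension `< d`, and so has its image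
`M ∩ M' ∩ B̄(x, r)` under the locally Lipschitz map `ψ`. -/

open Filter Topology Function Module

section

variable {E F : Type*} [NormedAddCommGroup E] [NormedSpace ℝ E]
  [NormedAddCommGroup F] [NormedSpace ℝ F]

theorem Submodule.dimH_lt_finrank_of_ne_top [FiniteDimensional ℝ E] {V : Submodule ℝ E}
    (hV : V ≠ ⊤) : dimH (V : Set E) < finrank ℝ E := by
  have hV_dim : dimH (V : Set E) = finrank ℝ V := by
    rw [← Real.dimH_univ_eq_finrank V, ← V.subtypeₗᵢ.isometry.dimH_image univ, image_univ]
    simp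
  rw [hV_dim]
  exact_mod_cast Submodule.finrank_lt hV

theorem HasStrictFDerivAt.exists_dimH_lt_fiber_of_ne_zero_real [FiniteDimensional ℝ E]
    {g : E → ℝ} {g' : E →L[ℝ] ℝ} {y₀ : E} (hg : HasStrictFDerivAt g g' y₀) (hg' : g' ≠ 0) :
    ∃ Z : Set E, dimH Z < finrank ℝ E ∧ ∀ᶠ y in 𝓝 y₀, g y = g y₀ → y ∈ Z := by
  obtain ⟨e, he⟩ : ∃ e, g' e = 1 := by
    obtain ⟨w, hw⟩ := DFunLike.ne_iff.mp hg'
    exact ⟨(g' w)⁻¹ • w, by simp_all⟩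
  -- `Ψ` is tangent to the identity at `y₀` and maps the fiber of `g` into `ker g'`.
  set Ψ : E → E := fun y => y + (g y - g y₀ - g' y) • e
  have hΨ : HasStrictFDerivAt Ψ (ContinuousLinearEquiv.refl ℝ E : E →L[ℝ] E) y₀ := by
    refine ((hasStrictFDerivAt_id y₀).add
      (((hg.sub_const (g y₀)).sub g'.hasStrictFDerivAt).smul_const e)).congr_fderiv ?_
    ext; simp
  set H : Submodule ℝ E := LinearMap.ker (g' : E →ₗ[ℝ] ℝ)
  have hH : H ≠ ⊤ := by
    rw [Ne, LinearMap.ker_eq_top]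
    exact_mod_cast hg'
  obtain ⟨K, t, ht, hK⟩ := hΨ.to_localInverse.exists_lipschitzOnWith
  refine ⟨hΨ.localInverse Ψ _ y₀ '' ((H : Set E) ∩ t), ?_, ?_⟩
  · calc dimH (hΨ.localInverse Ψ _ y₀ '' ((H : Set E) ∩ t))
        ≤ dimH ((H : Set E) ∩ t) := (hK.mono inter_subset_right).dimH_image_le
      _ ≤ dimH (H : Set E) := dimH_mono inter_subset_left
      _ < finrank ℝ E := Submodule.dimH_lt_finrank_of_ne_top hH
  · filter_upwards [hΨ.eventually_left_inverse, hΨ.continuousAt.preimage_mem_nhds ht]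
      with y hinv hyt hy
    exact ⟨Ψ y, ⟨by simp [Ψ, H, he, hy], hyt⟩, hinv⟩

theorem HasStrictFDerivAt.exists_dimH_lt_fiber_of_ne_zero [FiniteDimensional ℝ E]
    {f : E → F} {f' : E →L[ℝ] F} {y₀ : E} (hf : HasStrictFDerivAt f f' y₀) (hf' : f' ≠ 0) :
    ∃ Z : Set E, dimH Z < finrank ℝ E ∧ ∀ᶠ y in 𝓝 y₀, f y = f y₀ → y ∈ Z := by
  obtain ⟨w, hw⟩ : ∃ w, f' w ≠ 0 := DFunLike.ne_iff.mp hf'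
  obtain ⟨ℓ, hℓ⟩ := SeparatingDual.exists_ne_zero (R := ℝ) hw
  have hℓf' : ℓ.comp f' ≠ 0 := DFunLike.ne_iff.mpr ⟨w, hℓ⟩
  obtain ⟨Z, hZ, hfZ⟩ :=
    (ℓ.hasStrictFDerivAt.comp y₀ hf).exists_dimH_lt_fiber_of_ne_zero_real hℓf'
  exact ⟨Z, hZ, hfZ.mono fun y hy hfy => hy (by simp [hfy])⟩

/-- `nhdsWithin_le_map`: the points of `M` near `ψ y₀` are images of points near `y₀`. -/
structure IsLocalParametrization (M : Set F) (ψ : E → F) (A : E →L[ℝ] F) (y₀ : E) : Prop where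
  hasStrictFDerivAt : HasStrictFDerivAt ψ A y₀
  injective : Injective A
  eventually_mem : ∀ᶠ y in 𝓝 y₀, ψ y ∈ M
  nhdsWithin_le_map : 𝓝[M] (ψ y₀) ≤ map ψ (𝓝 y₀)

namespace IsLocalParametrization

variable {M : Set F} {ψ : E → F} {A : E →L[ℝ] F} {y₀ : E}

theorem exists_retraction [CompleteSpace E] [FiniteDimensional ℝ F]
    (hψ : IsLocalParametrization M ψ A y₀) :
    ∃ (G : F → F) (G' : F →L[ℝ] F), HasStrictFDerivAt G G' (ψ y₀) ∧ range G' ⊆ range A ∧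
      ∀ᶠ p in 𝓝[M] (ψ y₀), G p = p := by
  obtain ⟨π, hπ⟩ :=
    ContinuousLinearMap.HasLeftInverse.of_injective_of_finiteDimensional hψ.injective
  have hh : HasStrictFDerivAt (π ∘ ψ) (ContinuousLinearEquiv.refl ℝ E : E →L[ℝ] E) y₀ :=
    (π.hasStrictFDerivAt.comp y₀ hψ.hasStrictFDerivAt).congr_fderiv (by ext; simp [hπ _])
  set σ := hh.localInverse (π ∘ ψ) _ y₀
  have hσ : HasStrictFDerivAt (σ ∘ π) π (ψ y₀) :=
    hh.to_localInverse.comp (ψ y₀) π.hasStrictFDerivAt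
  have hψσ : HasStrictFDerivAt ψ A (σ (π (ψ y₀))) := by
    rw [show σ (π (ψ y₀)) = y₀ from hh.localInverse_apply_image]
    exact hψ.hasStrictFDerivAt
  refine ⟨ψ ∘ σ ∘ π, A.comp π, hψσ.comp (ψ y₀) hσ, ?_, ?_⟩
  · rintro _ ⟨p, rfl⟩
    exact ⟨π p, rfl⟩
  · exact hψ.nhdsWithin_le_map (hh.eventually_left_inverse.mono fun z hz => by simp_all [σ])

theorem exists_dimH_inter_closedBall_lt (hψ : IsLocalParametrization M ψ A y₀) {N : Set F}
    {Z : Set E} {n : ℝ≥0∞} (hZ : dimH Z < n) (hNZ : ∀ᶠ y in 𝓝 y₀, ψ y ∈ N → y ∈ Z) :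
    ∃ r > 0, dimH (M ∩ N ∩ closedBall (ψ y₀) r) < n := by
  obtain ⟨K, s, hs, hK⟩ := hψ.hasStrictFDerivAt.exists_lipschitzOnWith
  have hloc : ∀ᶠ p in 𝓝[M] (ψ y₀), p ∈ N → p ∈ ψ '' (Z ∩ s) :=
    hψ.nhdsWithin_le_map <| eventually_map.mpr <| by
      filter_upwards [hNZ, hs] with y hyZ hys hyN using ⟨y, ⟨hyZ hyN, hys⟩, rfl⟩
  obtain ⟨ε, hε, hεloc⟩ := Metric.mem_nhdsWithin_iff.mp hloc
  refine ⟨ε / 2, half_pos hε, lt_of_le_of_lt ?_ hZ⟩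
  calc dimH (M ∩ N ∩ closedBall (ψ y₀) (ε / 2))
      ≤ dimH (ψ '' (Z ∩ s)) := dimH_mono fun p ⟨⟨hpM, hpN⟩, hpB⟩ =>
        hεloc ⟨closedBall_subset_ball (half_lt_self hε) hpB, hpM⟩ hpN
    _ ≤ dimH (Z ∩ s) := (hK.mono inter_subset_right).dimH_image_le
    _ ≤ dimH Z := dimH_mono inter_subset_left

end IsLocalParametrization

theorem ContinuousLinearMap.range_eq_of_range_subset [FiniteDimensional ℝ E] {A A' : E →L[ℝ] F}
    (hA : Injective A) (hA' : Injective A') (h : range A ⊆ range A') : range A = range A' := by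
  have hle : LinearMap.range (A : E →ₗ[ℝ] F) ≤ LinearMap.range (A' : E →ₗ[ℝ] F) := h
  have := Submodule.eq_of_le_of_finrank_le hle
    (by rw [LinearMap.finrank_range_of_inj hA, LinearMap.finrank_range_of_inj hA'])
  exact congrArg SetLike.coe this

end

section Tangent

variable {E : Type*} [NormedAddCommGroup E] [NormedSpace ℝ E] {M : Set (Euc D)}

theorem tangentSetAt_subset_range_of_eventually_eq {x : Euc D} {G : Euc D → Euc D}
    {G' : Euc D →L[ℝ] Euc D} (hG : HasFDerivAt G G' x) (hGM : ∀ᶠ p in 𝓝[M] x, G p = p) :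
    TangentSetAt M x ⊆ range G' := by
  rintro v ⟨γ, hγM, rfl, hγ⟩
  have hγG : G ∘ γ =ᶠ[𝓝 0] γ :=
    (tendsto_nhdsWithin_iff.mpr ⟨hγ.continuousAt, Eventually.of_forall hγM⟩).eventually hGM
  exact ⟨v, (hG.comp_hasDerivAt 0 hγ).unique (hγ.congr_of_eventuallyEq hγG)⟩

namespace IsLocalParametrization

variable {ψ : E → Euc D} {A : E →L[ℝ] Euc D} {y₀ : E}

theorem range_subset_tangentSetAt (hψ : IsLocalParametrization M ψ A y₀) :
    range A ⊆ TangentSetAt M (ψ y₀) := by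
  classical
  rintro _ ⟨w, rfl⟩
  have hline : HasDerivAt (fun t : ℝ => y₀ + t • w) w 0 := by
    simpa using ((hasDerivAt_id (0 : ℝ)).smul_const w).const_add y₀
  have hlineM : ∀ᶠ t in 𝓝 (0 : ℝ), ψ (y₀ + t • w) ∈ M :=
    hline.continuousAt.tendsto.eventually (by simpa using hψ.eventually_mem)
  refine ⟨fun t => if ψ (y₀ + t • w) ∈ M then ψ (y₀ + t • w) else ψ y₀, fun t => ?_,
    by simp, ?_⟩
  · dsimp only
    split_ifs with ht
    exacts [ht, hψ.eventually_mem.self_of_nhds]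
  · refine HasDerivAt.congr_of_eventuallyEq ?_ (hlineM.mono fun t ht => if_pos ht)
    exact hψ.hasStrictFDerivAt.hasFDerivAt.comp_hasDerivAt_of_eq 0 hline (by simp)

theorem tangentSetAt_eq [CompleteSpace E] (hψ : IsLocalParametrization M ψ A y₀) :
    TangentSetAt M (ψ y₀) = range A := by
  obtain ⟨G, G', hG, hG'A, hGM⟩ := hψ.exists_retraction
  exact ((tangentSetAt_subset_range_of_eventually_eq hG.hasFDerivAt hGM).trans hG'A).antisymm
    hψ.range_subset_tangentSetAt

end IsLocalParametrization

theorem IsSubmanifold.exists_isLocalParametrization {k d : ℕ} (hk : k ≠ 0)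
    (hM : IsSubmanifold k d M) {x : Euc D} (hx : x ∈ M) :
    ∃ (ψ : Euc d → Euc D) (A : Euc d →L[ℝ] Euc D) (y₀ : Euc d),
      ψ y₀ = x ∧ IsLocalParametrization M ψ A y₀ := by
  obtain ⟨u, v, ψ, φ, hu, hv, hxv, hψ, hinj, hbij, hφ, hφψ⟩ := hM x hx
  obtain ⟨y₀, hy₀, rfl⟩ := hbij.surjOn ⟨hx, hxv⟩
  refine ⟨ψ, fderiv ℝ ψ y₀, y₀, rfl,
    ⟨(hψ.contDiffAt (hu.mem_nhds hy₀)).hasStrictFDerivAt (by exact_mod_cast hk), hinj y₀ hy₀,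
      mem_of_superset (hu.mem_nhds hy₀) fun y hy => (hbij.mapsTo hy).1, fun S hS => ?_⟩⟩
  have hvM : v ∈ 𝓝[M] (ψ y₀) := mem_nhdsWithin_of_mem_nhds (hv.mem_nhds hxv)
  have hφ_tendsto : Tendsto φ (𝓝[M] (ψ y₀)) (𝓝 y₀) := by
    simpa [nhdsWithin_inter_of_mem' hvM, hφψ y₀ hy₀] using (hφ _ ⟨hx, hxv⟩).tendsto
  filter_upwards [hφ_tendsto (inter_mem (hu.mem_nhds hy₀) hS), self_mem_nhdsWithin, hvM]
    with p ⟨hpu, hpS⟩ hpM hpv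
  obtain ⟨z, hz, rfl⟩ := hbij.surjOn ⟨hpM, hpv⟩
  rwa [mem_preimage, hφψ z hz] at hpS

end Tangent

theorem hausdorff_measure_zero_of_transverse_intersection_general (d : ℕ) (M M' : Set (Euc D))
    (hM : IsSubmanifold 1 d M) (hM' : IsSubmanifold 1 d M')
    (x : Euc D) (hxM : x ∈ M) (hxM' : x ∈ M')
    (hT : TangentSetAt M x ≠ TangentSetAt M' x) :
    ∃ r : ℝ, 0 < r ∧ μH[(d : ℝ)] (M ∩ M' ∩ Metric.closedBall x r) = 0 := by
  obtain ⟨ψ, A, y₀, rfl, hψ⟩ := hM.exists_isLocalParametrization one_ne_zero hxM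
  obtain ⟨ψ', A', z₀, hψ'x, hψ'⟩ := hM'.exists_isLocalParametrization one_ne_zero hxM'
  obtain ⟨G, G', hG, hG'A', hGM'⟩ := hψ'.exists_retraction
  rw [hψ'x] at hG hGM'
  have hf : HasStrictFDerivAt (fun y => ψ y - G (ψ y)) (A - G'.comp A) y₀ :=
    hψ.hasStrictFDerivAt.sub (hG.comp y₀ hψ.hasStrictFDerivAt)
  have hf' : A - G'.comp A ≠ 0 := by
    refine fun hAG => hT ?_
    have hAA' : range A ⊆ range A' := fun _ ⟨w, hw⟩ =>
      hG'A' ⟨A w, Eq.symm <| by simpa [hw, sub_eq_zero] using DFunLike.congr_fun hAG w⟩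
    rw [hψ.tangentSetAt_eq, ← hψ'x, hψ'.tangentSetAt_eq]
    exact ContinuousLinearMap.range_eq_of_range_subset hψ.injective hψ'.injective hAA'
  obtain ⟨Z, hZ, hfZ⟩ := hf.exists_dimH_lt_fiber_of_ne_zero hf'
  have hM'Z : ∀ᶠ y in 𝓝 y₀, ψ y ∈ M' → y ∈ Z := by
    have hGψ : ∀ᶠ y in 𝓝 y₀, ψ y ∈ M' → G (ψ y) = ψ y :=
      hψ.hasStrictFDerivAt.continuousAt.eventually (eventually_nhdsWithin_iff.mp hGM')
    filter_upwards [hfZ, hGψ] with y hyZ hyG hyM'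
    exact hyZ (by simp [hyG hyM', hGM'.self_of_nhdsWithin hxM'])
  obtain ⟨r, hr, hdim⟩ := hψ.exists_dimH_inter_closedBall_lt hZ hM'Z
  refine ⟨r, hr, ?_⟩
  simpa using hausdorffMeasure_of_dimH_lt (d := d) (by simpa using hdim)

/-- Corollary `thm:non_parallel_intersections_have_measure_zero`.
Let `M, M' ⊂ ℝ^D` be compact `d`-dimensional `C¹` submanifolds and `x ∈ M ∩ M'` with
`T_x M ≠ T_x M'`. Then there is `r > 0` such that `M ∩ M' ∩ B̄(x, r)` has `d`-dimensional
Hausdorff measure zero. -/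
theorem hausdorff_measure_zero_of_transverse_intersection (d : ℕ) (M M' : Set (Euc D))
    (hM : IsSubmanifold 1 d M) (hM' : IsSubmanifold 1 d M')
    (hMc : IsCompact M) (hMc' : IsCompact M')
    (x : Euc D) (hxM : x ∈ M) (hxM' : x ∈ M')
    (hT : TangentSetAt M x ≠ TangentSetAt M' x) :
    ∃ r : ℝ, 0 < r ∧ μH[(d : ℝ)] (M ∩ M' ∩ Metric.closedBall x r) = 0 :=
  hausdorff_measure_zero_of_transverse_intersection_general d M M' hM hM' x hxM hxM' hT
end
end
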